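/- arXiv:2110.04645 — 6 statements merged into one kernel-verified Lean document; each statement's English description precedes it below -/
import Mathlib

section
/- Fix an integer H ≥ 1 and let η_n = (H+1)/(H+n). For any integer N > 0 and any real number a with 1/2 ≤ a ≤ 1, one has 1/N^a ≤ Σ_{n=1}^{N} η_n^N / n^a ≤ 2/N^a. -/
/-!
The weights `η_n^N` obey `η_n^{N+1} = (1 - η_{N+1}) η_n^N` for `n ≤ N`, so every weighted sum
`S_N = ∑_{n ≤ N} η_n^N f(n)` satisfies `S_{N+1} = (1 - η_{N+1}) S_N + η_{N+1} f(N+1)`, and since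
`η_1 = 1` the weights form a probability vector on `{1, …, N}`. The lower bound is then the fact
that `1/n^a ≥ 1/N^a` on that range. The upper bound `S_N ≤ 2/N^a` goes by induction along the
recursion: it reduces to `2N/N^a ≤ (H + 2N + 1)/(N+1)^a`, which holds because `H ≥ 1` and
`x ↦ x^{1-a}` is nondecreasing for `a ≤ 1`.
-/

open Finset

namespace LearningRate

/-- The closed form of `η_n^N` for `n ≤ N`. -/
def weight (η : ℕ → ℝ) (n N : ℕ) : ℝ :=
  η n * ∏ i ∈ Icc (n + 1) N, (1 - η i)

variable {η : ℕ → ℝ}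

theorem weight_self (n : ℕ) : weight η n n = η n := by
  simp [weight]

theorem weight_succ_of_le {n N : ℕ} (h : n ≤ N) :
    weight η n (N + 1) = (1 - η (N + 1)) * weight η n N := by
  rw [weight, weight, prod_Icc_succ_top (by omega)]
  ring

theorem weight_nonneg {n N : ℕ} (hη : ∀ i, n ≤ i → η i ∈ Set.Icc 0 1) : 0 ≤ weight η n N :=
  mul_nonneg (hη n le_rfl).1 <| prod_nonneg fun i hi =>
    sub_nonneg.2 (hη i (by simp only [mem_Icc] at hi; omega)).2

theorem sum_weight_mul_succ (f : ℕ → ℝ) (N : ℕ) :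
    ∑ n ∈ Icc 1 (N + 1), weight η n (N + 1) * f n
      = (1 - η (N + 1)) * ∑ n ∈ Icc 1 N, weight η n N * f n + η (N + 1) * f (N + 1) := by
  rw [sum_Icc_succ_top (by omega), weight_self, mul_sum]
  congr 1
  refine sum_congr rfl fun n hn => ?_
  rw [weight_succ_of_le (mem_Icc.1 hn).2]
  ring

theorem sum_weight_eq_one (hη₁ : η 1 = 1) {N : ℕ} (hN : 1 ≤ N) :
    ∑ n ∈ Icc 1 N, weight η n N = 1 := by
  induction N, hN using Nat.le_induction with
  | base => simp [weight_self, hη₁]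
  | succ N _ ih =>
    simpa [ih] using sum_weight_mul_succ (η := η) (fun _ => 1) N

theorem le_sum_weight_mul (hη : ∀ i, 1 ≤ i → η i ∈ Set.Icc 0 1) (hη₁ : η 1 = 1)
    {N : ℕ} (hN : 1 ≤ N) {f : ℕ → ℝ} {c : ℝ} (hf : ∀ n ∈ Icc 1 N, c ≤ f n) :
    c ≤ ∑ n ∈ Icc 1 N, weight η n N * f n :=
  calc c = ∑ n ∈ Icc 1 N, weight η n N * c := by rw [← sum_mul, sum_weight_eq_one hη₁ hN, one_mul]
    _ ≤ ∑ n ∈ Icc 1 N, weight η n N * f n := sum_le_sum fun n hn =>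
      mul_le_mul_of_nonneg_left (hf n hn)
        (weight_nonneg fun i hi => hη i ((mem_Icc.1 hn).1.trans hi))

theorem sum_weight_mul_le (hη : ∀ i, 1 ≤ i → η i ≤ 1) {f g : ℕ → ℝ}
    (hbase : η 1 * f 1 ≤ g 1)
    (hstep : ∀ N, 1 ≤ N → (1 - η (N + 1)) * g N + η (N + 1) * f (N + 1) ≤ g (N + 1))
    {N : ℕ} (hN : 1 ≤ N) :
    ∑ n ∈ Icc 1 N, weight η n N * f n ≤ g N := by
  induction N, hN using Nat.le_induction with
  | base => simpa [weight_self] using hbase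
  | succ N hN ih =>
    rw [sum_weight_mul_succ]
    have : 0 ≤ 1 - η (N + 1) := sub_nonneg.2 (hη _ (by omega))
    exact (add_le_add_left (mul_le_mul_of_nonneg_left ih this) _).trans (hstep N hN)

end LearningRate

theorem Real.div_rpow_le_div_rpow_of_le {x y a : ℝ} (hx : 0 < x) (hxy : x ≤ y) (ha : a ≤ 1) :
    x / x ^ a ≤ y / y ^ a := by
  have hy : 0 < y := hx.trans_le hxy
  have h := Real.rpow_le_rpow hx.le hxy (sub_nonneg.2 ha)
  rwa [Real.rpow_sub hx, Real.rpow_sub hy, Real.rpow_one, Real.rpow_one] at h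

theorem learning_rate_step_le {H m a : ℝ} (hH : 1 ≤ H) (hm : 0 < m) (ha : a ≤ 1) :
    (1 - (H + 1) / (H + (m + 1))) * (2 / m ^ a) + (H + 1) / (H + (m + 1)) * (1 / (m + 1) ^ a)
      ≤ 2 / (m + 1) ^ a := by
  have hx : 0 < m ^ a := Real.rpow_pos_of_pos hm a
  have hy : 0 < (m + 1) ^ a := Real.rpow_pos_of_pos (by linarith) a
  have hmono := Real.div_rpow_le_div_rpow_of_le hm (le_add_of_nonneg_right zero_le_one) ha
  rw [div_le_div_iff₀ hx hy] at hmono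
  rw [← sub_nonneg]
  have hgap : 2 / (m + 1) ^ a
      - ((1 - (H + 1) / (H + (m + 1))) * (2 / m ^ a) + (H + 1) / (H + (m + 1)) * (1 / (m + 1) ^ a))
      = ((H + 2 * m + 1) * m ^ a - 2 * m * (m + 1) ^ a) / ((H + (m + 1)) * m ^ a * (m + 1) ^ a) := by
    field_simp
    ring
  rw [hgap]
  apply div_nonneg _ (by positivity)
  nlinarith [mul_nonneg (sub_nonneg.2 hH) hx.le]

open LearningRate

theorem learning_rate_rpow_sum_bounds_general
    (H : ℕ) (hH : 1 ≤ H)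
    (η : ℕ → ℝ) (hη : ∀ n : ℕ, η n = (H + 1 : ℝ) / (H + n))
    (ηN : ℕ → ℕ → ℝ)
    (hηN_eq : ∀ n : ℕ, ηN n n = η n)
    (hηN_gt : ∀ n N : ℕ, n < N → ηN n N = η n * ∏ i ∈ Finset.Icc (n + 1) N, (1 - η i))
    (N : ℕ) (hN : 0 < N)
    (a : ℝ) (ha₁ : 1 / 2 ≤ a) (ha₂ : a ≤ 1) :
    1 / (N : ℝ) ^ a ≤ ∑ n ∈ Finset.Icc 1 N, ηN n N / (n : ℝ) ^ a ∧
      ∑ n ∈ Finset.Icc 1 N, ηN n N / (n : ℝ) ^ a ≤ 2 / (N : ℝ) ^ a := by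
  have hH' : (1 : ℝ) ≤ H := by exact_mod_cast hH
  have hη_mem : ∀ i, 1 ≤ i → η i ∈ Set.Icc 0 1 := fun i hi => by
    have : (1 : ℝ) ≤ i := by exact_mod_cast hi
    rw [hη, Set.mem_Icc, div_le_one (by positivity)]
    exact ⟨by positivity, by linarith⟩
  have hη₁ : η 1 = 1 := by rw [hη, Nat.cast_one, div_self (by positivity)]
  have hsum : ∑ n ∈ Icc 1 N, ηN n N / (n : ℝ) ^ a
      = ∑ n ∈ Icc 1 N, weight η n N * (1 / (n : ℝ) ^ a) := by
    refine sum_congr rfl fun n hn => ?_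
    rcases (mem_Icc.1 hn).2.eq_or_lt with rfl | hlt
    · rw [hηN_eq, weight_self, mul_one_div]
    · rw [hηN_gt n N hlt, weight, mul_one_div]
  rw [hsum]
  refine ⟨le_sum_weight_mul hη_mem hη₁ hN fun n hn => ?_,
    sum_weight_mul_le (f := fun n => 1 / (n : ℝ) ^ a) (g := fun n => 2 / (n : ℝ) ^ a)
      (fun i hi => (hη_mem i hi).2) (by norm_num [hη₁]) (fun M hM => ?_) hN⟩
  · obtain ⟨hn₁, hnN⟩ := mem_Icc.1 hn
    have hn : (0 : ℝ) < n := by exact_mod_cast hn₁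
    exact one_div_le_one_div_of_le (by positivity)
      (Real.rpow_le_rpow hn.le (by exact_mod_cast hnN) (by linarith))
  · have hM' : (0 : ℝ) < M := by exact_mod_cast hM
    simpa [hη, add_assoc] using learning_rate_step_le hH' hM' ha₂

/-- **Learning-rate sum bounds** (Lemma 1, eq. (12) of the paper).
Fix an integer `H ≥ 1` and let `η n = (H+1)/(H+n)`; for `1 ≤ n ≤ N` let
`η_n^N = η_n ∏_{i=n+1}^N (1 - η_i)` (so `η_n^N = η_n` when `N = n`), and `η_n^N = 0`
for `N < n`.  Then for every integer `N > 0` and every real `1/2 ≤ a ≤ 1`,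
`1/N^a ≤ ∑_{n=1}^N η_n^N / n^a ≤ 2/N^a`. -/
theorem learning_rate_rpow_sum_bounds
    (H : ℕ) (hH : 1 ≤ H)
    (η : ℕ → ℝ) (hη : ∀ n : ℕ, η n = (H + 1 : ℝ) / (H + n))
    (ηN : ℕ → ℕ → ℝ)
    (hηN_lt : ∀ n N : ℕ, N < n → ηN n N = 0)
    (hηN_eq : ∀ n : ℕ, ηN n n = η n)
    (hηN_gt : ∀ n N : ℕ, n < N → ηN n N = η n * ∏ i ∈ Finset.Icc (n + 1) N, (1 - η i))
    (N : ℕ) (hN : 0 < N)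
    (a : ℝ) (ha₁ : 1 / 2 ≤ a) (ha₂ : a ≤ 1) :
    1 / (N : ℝ) ^ a ≤ ∑ n ∈ Finset.Icc 1 N, ηN n N / (n : ℝ) ^ a ∧
      ∑ n ∈ Finset.Icc 1 N, ηN n N / (n : ℝ) ^ a ≤ 2 / (N : ℝ) ^ a :=
  learning_rate_rpow_sum_bounds_general H hH η hη ηN hηN_eq hηN_gt N hN a ha₁ ha₂
end

section
/- Fix an integer H ≥ 1 and let η_n = (H+1)/(H+n). For any integer N > 0, one has max_{1 ≤ n ≤ N} η_n^N ≤ 2H/N. -/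
/-- **Learning-rate maximum bound** (Lemma 1 of the paper).
Fix an integer `H ≥ 1` and let `η n = (H+1)/(H+n)`; for `1 ≤ n ≤ N` let
`η_n^N = η_n ∏_{i=n+1}^N (1 - η_i)` (so `η_n^N = η_n` when `N = n`), and `η_n^N = 0`
for `N < n`.  Then for every integer `N > 0`, `max_{1 ≤ n ≤ N} η_n^N ≤ 2H/N`. -/
theorem learning_rate_max_le
    (H : ℕ) (hH : 1 ≤ H)
    (η : ℕ → ℝ) (hη : ∀ n : ℕ, η n = (H + 1 : ℝ) / (H + n))
    (ηN : ℕ → ℕ → ℝ)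
    (hηN_lt : ∀ n N : ℕ, N < n → ηN n N = 0)
    (hηN_eq : ∀ n : ℕ, ηN n n = η n)
    (hηN_gt : ∀ n N : ℕ, n < N → ηN n N = η n * ∏ i ∈ Finset.Icc (n + 1) N, (1 - η i))
    (N : ℕ) (hN : 0 < N) :
    ∀ n ∈ Finset.Icc 1 N, ηN n N ≤ 2 * H / N := by
  intro n hn
  rw [Finset.mem_Icc] at hn
  obtain ⟨hn1, hnN⟩ := hn
  have hH1 : (1 : ℝ) ≤ H := by exact_mod_cast hH
  have hpos : ∀ m : ℕ, (0 : ℝ) < H + m := fun m => by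
    have : (0 : ℝ) ≤ m := Nat.cast_nonneg m
    linarith
  -- step recursion
  have hstep : ∀ M, n ≤ M → ηN n (M + 1) = ηN n M * (1 - η (M + 1)) := by
    intro M hM
    rw [hηN_gt n (M + 1) (by omega),
      Finset.prod_Icc_succ_top (by omega : n + 1 ≤ M + 1)]
    rcases eq_or_lt_of_le hM with h | h
    · subst h
      rw [hηN_eq, Finset.Icc_eq_empty (by omega), Finset.prod_empty]
      ring
    · rw [hηN_gt n M h]; ring
  -- key bound by induction
  have key : ∀ M, n ≤ M → ηN n M ≤ (H + 1) / (H + M) ∧ 0 ≤ ηN n M := by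
    intro M hM
    induction M, hM using Nat.le_induction with
    | base =>
      rw [hηN_eq, hη]
      exact ⟨le_refl _, by positivity⟩
    | succ M hM ih =>
      obtain ⟨ih1, ih2⟩ := ih
      rw [hstep M hM]
      have hη1 : 1 - η (M + 1) = (M : ℝ) / (H + (M + 1)) := by
        rw [hη]
        have h := hpos (M + 1)
        push_cast at h ⊢
        field_simp
        ring
      have hηnn : 0 ≤ 1 - η (M + 1) := by
        rw [hη1]; positivity
      constructor
      · refine le_trans (mul_le_mul_of_nonneg_right ih1 hηnn) ?_
        push_cast
        rw [hη1, div_mul_div_comm, div_le_div_iff₀ (by positivity) (by positivity)]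
        have hx : (0:ℝ) ≤ (↑H + 1) * (↑H + (↑M + 1)) * ↑H := by positivity
        nlinarith [hx]
      · exact mul_nonneg ih2 hηnn
  have hkey := (key N hnN).1
  refine hkey.trans ?_
  rw [div_le_div_iff₀ (hpos N) (by exact_mod_cast hN)]
  have hN1 : (1 : ℝ) ≤ N := by exact_mod_cast hN
  nlinarith
end

section
/- Fix an integer H ≥ 1 and let η_n = (H+1)/(H+n). For any integer N > 0, one has Σ_{n=1}^{N} (η_n^N)^2 ≤ 2H/N. -/
/-- **Learning-rate sum-of-squares bound** (Lemma 1 of the paper).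
Fix an integer `H ≥ 1` and let `η n = (H+1)/(H+n)`; for `1 ≤ n ≤ N` let
`η_n^N = η_n ∏_{i=n+1}^N (1 - η_i)` (so `η_n^N = η_n` when `N = n`), and `η_n^N = 0`
for `N < n`.  Then for every integer `N > 0`, `∑_{n=1}^N (η_n^N)² ≤ 2H/N`. -/
theorem learning_rate_sum_sq_le
    (H : ℕ) (hH : 1 ≤ H)
    (η : ℕ → ℝ) (hη : ∀ n : ℕ, η n = (H + 1 : ℝ) / (H + n))
    (ηN : ℕ → ℕ → ℝ)
    (hηN_lt : ∀ n N : ℕ, N < n → ηN n N = 0)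
    (hηN_eq : ∀ n : ℕ, ηN n n = η n)
    (hηN_gt : ∀ n N : ℕ, n < N → ηN n N = η n * ∏ i ∈ Finset.Icc (n + 1) N, (1 - η i))
    (N : ℕ) (hN : 0 < N) :
    ∑ n ∈ Finset.Icc 1 N, (ηN n N) ^ 2 ≤ 2 * H / N := by
  have hH1 : (1:ℝ) ≤ H := by exact_mod_cast hH
  have hden : ∀ n : ℕ, (0:ℝ) < H + n := by
    intro n
    have : (0:ℝ) ≤ n := Nat.cast_nonneg n
    linarith
  have hηpos : ∀ n : ℕ, 0 < η n := by
    intro n; rw [hη]; exact div_pos (by linarith) (hden n)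
  have hηle1 : ∀ n : ℕ, 1 ≤ n → η n ≤ 1 := by
    intro n hn
    rw [hη]
    rw [div_le_one (hden n)]
    have : (1:ℝ) ≤ n := by exact_mod_cast hn
    linarith
  set g : ℕ → ℝ := fun n => ∏ i ∈ Finset.Icc (n+1) N, (1 - η i) with hg
  have hgnonneg : ∀ n : ℕ, 0 ≤ g n := by
    intro n
    apply Finset.prod_nonneg
    intro i hi
    have hi1 : 1 ≤ i := le_trans (Nat.succ_le_succ (Nat.zero_le n)) (Finset.mem_Icc.mp hi).1
    have := hηle1 i hi1
    linarith
  have hgrec : ∀ n : ℕ, n < N → g n = (1 - η (n+1)) * g (n+1) := by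
    intro n hn
    simp only [hg]
    rw [← Finset.Ico_add_one_right_eq_Icc, ← Finset.Ico_add_one_right_eq_Icc,
      Finset.prod_eq_prod_Ico_succ_bot (by omega : n + 1 < N + 1)]
  have hgN : g N = 1 := by
    simp [hg, Finset.Icc_eq_empty (by omega : ¬ N + 1 ≤ N)]
  -- the representation on [1, N]
  have hrep : ∀ n : ℕ, 1 ≤ n → n ≤ N → ηN n N = η n * g n := by
    intro n h1 h2
    rcases eq_or_lt_of_le h2 with h | h
    · subst h; rw [hηN_eq, hgN, mul_one]
    · exact hηN_gt n N h
  -- each term is at most (H+1)/(H+N)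
  have hkey : ∀ k : ℕ, k ≤ N → η (N - k) * g (N - k) ≤ (H + 1) / (H + N) := by
    intro k
    induction k with
    | zero =>
      intro _
      rw [Nat.sub_zero, hgN, mul_one, hη N]
    | succ k ih =>
      intro hk
      have hk' : k ≤ N := by omega
      set n := N - (k+1) with hn
      have hn1 : n + 1 = N - k := by omega
      have hnN : n < N := by omega
      have hfac : η n * (1 - η (n+1)) ≤ η (n+1) := by
        rw [hη n, hη (n+1)]
        push_cast
        have h1 : (0:ℝ) < H + n := hden n
        have h2 : (0:ℝ) < (H:ℝ) + ((n:ℝ) + 1) := by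
          have := hden n; linarith
        have hnn : (0:ℝ) ≤ n := Nat.cast_nonneg n
        rw [div_mul_eq_mul_div, div_le_div_iff₀ h1 h2]
        have hexp : (1 - ((H:ℝ)+1)/((H:ℝ)+((n:ℝ)+1))) * ((H:ℝ)+((n:ℝ)+1)) = (n:ℝ) := by
          field_simp
          ring
        nlinarith [hexp]
      calc η n * g n = (η n * (1 - η (n+1))) * g (n+1) := by
            rw [hgrec n hnN]; ring
        _ ≤ η (n+1) * g (n+1) :=
            mul_le_mul_of_nonneg_right hfac (hgnonneg (n+1))
        _ ≤ (H + 1) / (H + N) := by rw [hn1]; exact ih hk'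
  have hbound : ∀ n : ℕ, 1 ≤ n → n ≤ N → η n * g n ≤ (H + 1) / (H + N) := by
    intro n h1 h2
    have h3 := hkey (N - n) (by omega)
    rwa [show N - (N - n) = n by omega] at h3
  -- sum of the weights is at most 1
  have hsum : ∑ n ∈ Finset.Icc 1 N, η n * g n ≤ 1 := by
    have htel : ∑ n ∈ Finset.Icc 1 N, η n * g n
        = ∑ i ∈ Finset.range N, (g (i+1) - g i) := by
      rw [← Finset.Ico_add_one_right_eq_Icc, Finset.sum_Ico_eq_sum_range]
      apply Finset.sum_congr rfl
      intro i hi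
      have hiN : i < N := Finset.mem_range.mp hi
      rw [hgrec i hiN, add_comm 1 i]
      ring
    rw [htel, Finset.sum_range_sub g, hgN]
    have := hgnonneg 0
    linarith
  -- put things together
  have hc : (0:ℝ) < (H + 1) / (H + N) := div_pos (by linarith) (hden N)
  have hstep : ∑ n ∈ Finset.Icc 1 N, (ηN n N) ^ 2
      ≤ (H + 1) / (H + N) * ∑ n ∈ Finset.Icc 1 N, η n * g n := by
    rw [Finset.mul_sum]
    apply Finset.sum_le_sum
    intro n hn
    obtain ⟨h1, h2⟩ := Finset.mem_Icc.mp hn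
    rw [hrep n h1 h2, sq]
    have hnng : 0 ≤ η n * g n := mul_nonneg (le_of_lt (hηpos n)) (hgnonneg n)
    exact mul_le_mul_of_nonneg_right (hbound n h1 h2) hnng
  have hfin : (H + 1 : ℝ) / (H + N) ≤ 2 * H / N := by
    have hN1 : (1:ℝ) ≤ N := by exact_mod_cast hN
    rw [div_le_div_iff₀ (hden N) (by linarith)]
    nlinarith
  calc ∑ n ∈ Finset.Icc 1 N, (ηN n N) ^ 2
      ≤ (H + 1) / (H + N) * ∑ n ∈ Finset.Icc 1 N, η n * g n := hstep
    _ ≤ (H + 1) / (H + N) * 1 := by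
        exact mul_le_mul_of_nonneg_left hsum (le_of_lt hc)
    _ = (H + 1) / (H + N) := mul_one _
    _ ≤ 2 * H / N := hfin
end

section
/- Fix an integer H ≥ 1 and let η_n = (H+1)/(H+n). For any integer n > 0, one has Σ_{N=n}^{∞} η_n^N ≤ 1 + 1/H. -/
/-- **Learning-rate tail-sum bound** (Lemma 1 of the paper).
Fix an integer `H ≥ 1` and let `η n = (H+1)/(H+n)`; for `1 ≤ n ≤ N` let
`η_n^N = η_n ∏_{i=n+1}^N (1 - η_i)` (so `η_n^N = η_n` when `N = n`), and `η_n^N = 0`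
for `N < n`.  Then for every integer `n > 0`, `∑_{N=n}^∞ η_n^N ≤ 1 + 1/H`
(the series converges; since `η_n^N = 0` for `N < n`, the sum over all `N : ℕ`
coincides with the tail sum over `N ≥ n`). -/
theorem learning_rate_tail_sum_le
    (H : ℕ) (hH : 1 ≤ H)
    (η : ℕ → ℝ) (hη : ∀ n : ℕ, η n = (H + 1 : ℝ) / (H + n))
    (ηN : ℕ → ℕ → ℝ)
    (hηN_lt : ∀ n N : ℕ, N < n → ηN n N = 0)
    (hηN_eq : ∀ n : ℕ, ηN n n = η n)
    (hηN_gt : ∀ n N : ℕ, n < N → ηN n N = η n * ∏ i ∈ Finset.Icc (n + 1) N, (1 - η i))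
    (n : ℕ) (hn : 0 < n) :
    Summable (fun N : ℕ => ηN n N) ∧ ∑' N : ℕ, ηN n N ≤ 1 + 1 / (H : ℝ) := by
  have hHpos : (0:ℝ) < H := by exact_mod_cast hH
  have hb : (1:ℝ) + 1 / H = (H + 1) / H := by field_simp
  -- nonnegativity of η
  have hηnonneg : ∀ k : ℕ, 0 ≤ η k := by
    intro k; rw [hη]; positivity
  have hηle : ∀ k : ℕ, 1 ≤ k → η k ≤ 1 := by
    intro k hk
    rw [hη]
    rw [div_le_one (by positivity)]
    have : (1:ℝ) ≤ k := by exact_mod_cast hk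
    linarith
  have hnonneg : ∀ N : ℕ, 0 ≤ ηN n N := by
    intro N
    rcases lt_trichotomy N n with h | h | h
    · rw [hηN_lt n N h]
    · rw [h, hηN_eq]; exact hηnonneg n
    · rw [hηN_gt n N h]
      apply mul_nonneg (hηnonneg n)
      apply Finset.prod_nonneg
      intro i hi
      have : 1 ≤ i := le_trans (by omega) (Finset.mem_Icc.mp hi).1
      linarith [hηle i this]
  -- recurrence
  have hrec : ∀ M : ℕ, n ≤ M → ηN n (M + 1) = ηN n M * (M / (H + M + 1)) := by
    intro M hM
    have h1 : ηN n (M + 1) = (η n * ∏ i ∈ Finset.Icc (n + 1) M, (1 - η i)) * (1 - η (M + 1)) := by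
      rw [hηN_gt n (M + 1) (by omega),
        Finset.prod_Icc_succ_top (by omega : n + 1 ≤ M + 1)]
      ring
    have h2 : η n * ∏ i ∈ Finset.Icc (n + 1) M, (1 - η i) = ηN n M := by
      rcases eq_or_lt_of_le hM with h | h
      · subst h
        rw [Finset.Icc_eq_empty (by omega : ¬ n + 1 ≤ n), Finset.prod_empty, mul_one, hηN_eq]
      · rw [hηN_gt n M h]
    have h3 : 1 - η (M + 1) = M / (H + M + 1) := by
      rw [hη]
      push_cast
      have hpos : (0:ℝ) < (H:ℝ) + M + 1 := by positivity
      field_simp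
      ring
    rw [h1, h2, h3]
  -- key inductive bound
  have key : ∀ M : ℕ, ∑ N ∈ Finset.range M, ηN n N
      + ((H + 1) / H) * (((H : ℝ) + M) / (H + 1) * ηN n M) ≤ (H + 1) / H := by
    intro M
    induction M with
    | zero =>
      simp [hηN_lt n 0 hn]
      positivity
    | succ M ih =>
      rw [Finset.sum_range_succ]
      rcases lt_trichotomy (M + 1) n with h | h | h
      · rw [hηN_lt n M (by omega), hηN_lt n (M + 1) h]
        simpa [hηN_lt n M (by omega)] using ih
      · -- M + 1 = n : partial sum so far is 0
        have hsum : ∑ N ∈ Finset.range M, ηN n N = 0 := by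
          apply Finset.sum_eq_zero
          intro i hi
          exact hηN_lt n i (by simp at hi; omega)
        subst h
        rw [hsum, hηN_lt (M + 1) M (by omega), hηN_eq, hη]
        have key2 : ((H:ℝ) + ↑(M + 1)) / (H + 1) * ((H + 1) / (H + ↑(M + 1))) = 1 := by
          have hpos : (0:ℝ) < (H:ℝ) + M + 1 := by positivity
          push_cast
          field_simp
        rw [key2]
        simp
      · -- n ≤ M
        have hM : n ≤ M := by omega
        rw [hrec M hM]
        have heq : ηN n M + ((H + 1) / H) * (((H : ℝ) + (M + 1 : ℕ)) / (H + 1)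
            * (ηN n M * (M / (H + M + 1)))) = ((H + 1) / H) * (((H : ℝ) + M) / (H + 1) * ηN n M) := by
          have h1 : (0:ℝ) < H + M + 1 := by positivity
          push_cast
          field_simp
          ring
        calc ∑ N ∈ Finset.range M, ηN n N + ηN n M
              + (H + 1) / H * (((H:ℝ) + (M + 1 : ℕ)) / (H + 1) * (ηN n M * (M / (H + M + 1))))
            = ∑ N ∈ Finset.range M, ηN n N
              + ((H + 1) / H) * (((H : ℝ) + M) / (H + 1) * ηN n M) := by
              rw [add_assoc, heq]
          _ ≤ (H + 1) / H := ih
  have hbound : ∀ M : ℕ, ∑ N ∈ Finset.range M, ηN n N ≤ 1 + 1 / H := by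
    intro M
    rw [hb]
    have h2 : 0 ≤ ((H + 1) / H) * (((H : ℝ) + M) / (H + 1) * ηN n M) := by
      have := hnonneg M
      positivity
    linarith [key M]
  have hs := summable_of_sum_range_le hnonneg hbound
  exact ⟨hs, Summable.tsum_le_of_sum_range_le hs hbound⟩
end

section
/- (Freedman's inequality, user-friendly version.) Consider a filtration F_0 ⊂ F_1 ⊂ F_2 ⊂ ⋯ and let E_k denote the expectation conditioned on F_k. Suppose Y_n = Σ_{k=1}^{n} X_k where the X_k are real-valued random variables with X_k measurable with respect to F_k, |X_k| ≤ R almost surely, and E_{k−1}[X_k] = 0 for all k ≥ 1, for some finite R. Define W_n = Σ_{k=1}^{n} E_{k−1}[X_k^2], and suppose W_n ≤ σ² holds almost surely for some finite σ². Then for any δ ∈ (0,1) and any positive integer m ≥ 1, with probability at least 1 − δ one has |Y_n| ≤ sqrt(8 · max{W_n, σ²/2^m} · log(2m/δ)) + (4/3) · R · log(2m/δ). -/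
open MeasureTheory
open Real Filter

namespace FreedmanAux

lemma exp_quad {u : ℝ} (hu : |u| ≤ 1) : Real.exp u ≤ 1 + u + u ^ 2 := by
  have h := Real.exp_bound hu (n := 2) (by norm_num)
  have hsum : ∑ i ∈ Finset.range 2, u ^ i / i.factorial = 1 + u := by
    simp [Finset.sum_range_succ]
  rw [hsum] at h
  have h2 := (abs_le.1 h).2
  have hs : |u| ^ 2 = u ^ 2 := sq_abs u
  rw [hs] at h2
  norm_num at h2
  nlinarith [sq_nonneg u]

lemma find_scale (σ2 M : ℝ) :
    ∀ m : ℕ, 1 ≤ m → σ2 / 2 ^ m ≤ M → M ≤ σ2 →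
      ∃ j, 1 ≤ j ∧ j ≤ m ∧ σ2 / 2 ^ j ≤ M ∧ M ≤ σ2 / 2 ^ (j - 1) := by
  intro m
  induction m with
  | zero => omega
  | succ p ih =>
    intro _ h1 h2
    by_cases hp : 1 ≤ p
    · by_cases hM : σ2 / 2 ^ p ≤ M
      · obtain ⟨j, hj1, hj2, hj⟩ := ih hp hM h2
        exact ⟨j, hj1, hj2.trans (Nat.le_succ p), hj⟩
      · push_neg at hM
        exact ⟨p + 1, by omega, le_rfl, h1, by simpa using hM.le⟩
    · have hp0 : p = 0 := by omega
      subst hp0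
      exact ⟨1, le_rfl, le_rfl, by simpa using h1, by simpa using h2⟩

lemma choose_lam {R b L : ℝ} (hR : 0 ≤ R) (hb : 0 < b) (hL : 0 < L) :
    ∃ lam : ℝ, 0 ≤ lam ∧ lam * R ≤ 1 ∧
      lam ^ 2 * b - lam * (2 * Real.sqrt (b * L) + 4 / 3 * R * L) ≤ -L := by
  have hsb := Real.sqrt_pos.2 hb
  have hsL := Real.sqrt_pos.2 hL
  have hsb2 : Real.sqrt b ^ 2 = b := Real.sq_sqrt hb.le
  have hsL2 : Real.sqrt L ^ 2 = L := Real.sq_sqrt hL.le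
  have hbL : Real.sqrt (b * L) = Real.sqrt b * Real.sqrt L := Real.sqrt_mul hb.le L
  by_cases hcase : R * Real.sqrt L ≤ Real.sqrt b
  · refine ⟨Real.sqrt L / Real.sqrt b, by positivity, ?_, ?_⟩
    · rw [div_mul_eq_mul_div, div_le_one hsb, mul_comm]
      exact hcase
    · rw [hbL]
      have e1 : (Real.sqrt L / Real.sqrt b) ^ 2 * b = L := by
        rw [div_pow, hsb2, hsL2, div_mul_cancel₀ _ hb.ne']
      have e2 : (Real.sqrt L / Real.sqrt b) * (2 * (Real.sqrt b * Real.sqrt L)) = 2 * L := by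
        field_simp
        nlinarith [hsL2]
      have e3 : 0 ≤ (Real.sqrt L / Real.sqrt b) * (4 / 3 * R * L) := by positivity
      nlinarith [e1, e2, e3]
  · push_neg at hcase
    have hRpos : 0 < R := by nlinarith
    refine ⟨1 / R, by positivity, by field_simp; exact le_rfl, ?_⟩
    rw [hbL]
    have key : b ≤ 2 * R * (Real.sqrt b * Real.sqrt L) + 1 / 3 * R ^ 2 * L := by
      nlinarith [mul_le_mul_of_nonneg_left hcase.le hsb.le,
        mul_nonneg (mul_nonneg hRpos.le hsb.le) hsL.le, mul_nonneg (sq_nonneg R) hL.le]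
    have hR2 : (0:ℝ) < R ^ 2 := by positivity
    rw [div_pow, one_pow]
    rw [div_mul_eq_mul_div, one_mul, div_mul_eq_mul_div, one_mul]
    rw [div_sub_div _ _ hR2.ne' hRpos.ne', div_le_iff₀ (by positivity)]
    ring_nf
    nlinarith [key, hR2]


variable {Ω : Type} [m0 : MeasurableSpace Ω]

noncomputable def vv (μ : Measure Ω) (𝓕 : Filtration ℕ m0) (X : ℕ → Ω → ℝ) (k : ℕ) : Ω → ℝ :=
  μ[fun ω' => (X k ω') ^ 2 | 𝓕 (k - 1)]

noncomputable def Wf (μ : Measure Ω) (𝓕 : Filtration ℕ m0) (X : ℕ → Ω → ℝ) (j : ℕ) (ω : Ω) : ℝ :=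
  ∑ k ∈ Finset.Icc 1 j, vv μ 𝓕 X k ω

def Yf (X : ℕ → Ω → ℝ) (j : ℕ) (ω : Ω) : ℝ := ∑ k ∈ Finset.Icc 1 j, X k ω

lemma int_of_bdd {μ : Measure Ω} [IsProbabilityMeasure μ] {f : Ω → ℝ}
    (hf : AEStronglyMeasurable f μ) {C : ℝ} (h : ∀ᵐ ω ∂μ, |f ω| ≤ C) : Integrable f μ :=
  Integrable.mono' (integrable_const C) hf (by simpa [Real.norm_eq_abs] using h)

section Core

variable (μ : Measure Ω) [IsProbabilityMeasure μ] (𝓕 : Filtration ℕ m0)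
  (X : ℕ → Ω → ℝ) (R : ℝ)

lemma exp_int
    (hadapt : ∀ k, 1 ≤ k → StronglyMeasurable[𝓕 k] (X k))
    (hbdd : ∀ k, 1 ≤ k → ∀ᵐ ω ∂μ, |X k ω| ≤ R)
    {lam : ℝ} (hlam0 : 0 ≤ lam) (j : ℕ) :
    Integrable (fun ω => Real.exp (lam * Yf X j ω - lam ^ 2 * Wf μ 𝓕 X j ω)) μ := by
  have hXsm : ∀ k, 1 ≤ k → StronglyMeasurable (X k) := fun k hk => (hadapt k hk).mono (𝓕.le k)
  have hv_nonneg : ∀ k, 0 ≤ᵐ[μ] vv μ 𝓕 X k := fun k =>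
    condExp_nonneg (ae_of_all μ fun ω => sq_nonneg (X k ω))
  have hvall : ∀ᵐ ω ∂μ, ∀ k, 0 ≤ vv μ 𝓕 X k ω := ae_all_iff.2 hv_nonneg
  have hXall : ∀ᵐ ω ∂μ, ∀ k, 1 ≤ k → |X k ω| ≤ R := by
    rw [ae_all_iff]
    intro k
    by_cases hk : 1 ≤ k
    · filter_upwards [hbdd k hk] with ω h _; exact h
    · filter_upwards with ω h; exact absurd h hk
  have hW_nonneg : ∀ᵐ ω ∂μ, 0 ≤ Wf μ 𝓕 X j ω := by
    filter_upwards [hvall] with ω h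
    exact Finset.sum_nonneg fun k _ => h k
  have hYbdd : ∀ᵐ ω ∂μ, |Yf X j ω| ≤ j * R := by
    filter_upwards [hXall] with ω h
    calc |Yf X j ω| ≤ ∑ k ∈ Finset.Icc 1 j, |X k ω| := Finset.abs_sum_le_sum_abs _ _
      _ ≤ (Finset.Icc 1 j).card • R :=
          Finset.sum_le_card_nsmul _ _ R fun k hk => h k (Finset.mem_Icc.1 hk).1
      _ = j * R := by rw [Nat.card_Icc, nsmul_eq_mul]; norm_num
  have hYsm : StronglyMeasurable (Yf X j) :=
    Finset.stronglyMeasurable_fun_sum _ fun k hk => hXsm k (Finset.mem_Icc.1 hk).1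
  have hWsm : StronglyMeasurable (Wf μ 𝓕 X j) :=
    Finset.stronglyMeasurable_fun_sum _ fun k _ =>
      (stronglyMeasurable_condExp (m := 𝓕 (k - 1))).mono (𝓕.le _)
  refine int_of_bdd (C := Real.exp (lam * (j * R))) (Continuous.comp_stronglyMeasurable
    Real.continuous_exp ((hYsm.const_mul lam).sub
      (hWsm.const_mul (lam ^ 2)))).aestronglyMeasurable ?_
  filter_upwards [hYbdd, hW_nonneg] with ω h1 h2
  rw [abs_of_pos (Real.exp_pos _), Real.exp_le_exp]
  have h3 : lam * Yf X j ω ≤ lam * (j * R) :=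
    mul_le_mul_of_nonneg_left ((abs_le.1 h1).2) hlam0
  nlinarith [sq_nonneg lam]

lemma mgf_le_one
    (hadapt : ∀ k, 1 ≤ k → StronglyMeasurable[𝓕 k] (X k))
    (hbdd : ∀ k, 1 ≤ k → ∀ᵐ ω ∂μ, |X k ω| ≤ R)
    (hmean : ∀ k, 1 ≤ k → μ[X k | 𝓕 (k - 1)] =ᵐ[μ] 0)
    (hR : 0 ≤ R) {lam : ℝ} (hlam0 : 0 ≤ lam) (hlamR : lam * R ≤ 1) :
    ∀ n, ∫ ω, Real.exp (lam * Yf X n ω - lam ^ 2 * Wf μ 𝓕 X n ω) ∂μ ≤ 1 := by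
  -- ambient strong measurability
  have hXsm : ∀ k, 1 ≤ k → StronglyMeasurable (X k) := fun k hk => (hadapt k hk).mono (𝓕.le k)
  have hX2int : ∀ k, 1 ≤ k → Integrable (fun ω => X k ω ^ 2) μ := by
    intro k hk
    refine int_of_bdd ((hXsm k hk).pow 2).aestronglyMeasurable (C := R ^ 2) ?_
    filter_upwards [hbdd k hk] with ω h
    rw [abs_pow]
    exact pow_le_pow_left₀ (abs_nonneg _) h 2
  have hv_nonneg : ∀ k, 0 ≤ᵐ[μ] vv μ 𝓕 X k := fun k =>
    condExp_nonneg (ae_of_all μ fun ω => sq_nonneg (X k ω))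
  have hv_le : ∀ k, 1 ≤ k → vv μ 𝓕 X k ≤ᵐ[μ] fun _ => R ^ 2 := by
    intro k hk
    have h1 : (fun ω => X k ω ^ 2) ≤ᵐ[μ] fun _ => R ^ 2 := by
      filter_upwards [hbdd k hk] with ω h
      calc X k ω ^ 2 = |X k ω| ^ 2 := (sq_abs _).symm
        _ ≤ R ^ 2 := pow_le_pow_left₀ (abs_nonneg _) h 2
    exact (condExp_const (μ := μ) (𝓕.le (k - 1)) (R ^ 2)) ▸
      condExp_mono (hX2int k hk) (integrable_const _) h1
  have hvall : ∀ᵐ ω ∂μ, ∀ k, 0 ≤ vv μ 𝓕 X k ω := ae_all_iff.2 hv_nonneg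
  have hXall : ∀ᵐ ω ∂μ, ∀ k, 1 ≤ k → |X k ω| ≤ R := by
    rw [ae_all_iff]
    intro k
    by_cases hk : 1 ≤ k
    · filter_upwards [hbdd k hk] with ω h _; exact h
    · filter_upwards with ω h; exact absurd h hk
  have hW_nonneg : ∀ j, ∀ᵐ ω ∂μ, 0 ≤ Wf μ 𝓕 X j ω := by
    intro j
    filter_upwards [hvall] with ω h
    exact Finset.sum_nonneg fun k _ => h k
  have hYbdd : ∀ j, ∀ᵐ ω ∂μ, |Yf X j ω| ≤ j * R := by
    intro j
    filter_upwards [hXall] with ω h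
    calc |Yf X j ω| ≤ ∑ k ∈ Finset.Icc 1 j, |X k ω| := Finset.abs_sum_le_sum_abs _ _
      _ ≤ (Finset.Icc 1 j).card • R :=
          Finset.sum_le_card_nsmul _ _ R fun k hk => h k (Finset.mem_Icc.1 hk).1
      _ = j * R := by rw [Nat.card_Icc, nsmul_eq_mul]; norm_num
  have hYsm : ∀ j, StronglyMeasurable (Yf X j) := by
    intro j
    apply Finset.stronglyMeasurable_fun_sum
    intro k hk
    exact hXsm k (Finset.mem_Icc.1 hk).1
  have hWsm : ∀ j, StronglyMeasurable (Wf μ 𝓕 X j) := by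
    intro j
    apply Finset.stronglyMeasurable_fun_sum
    intro k _
    exact (stronglyMeasurable_condExp (m := 𝓕 (k - 1))).mono (𝓕.le _)
  have hexp_int : ∀ j, Integrable
      (fun ω => Real.exp (lam * Yf X j ω - lam ^ 2 * Wf μ 𝓕 X j ω)) μ := fun j =>
    exp_int μ 𝓕 X R hadapt hbdd hlam0 j
  have hXint : ∀ k, 1 ≤ k → Integrable (X k) μ := fun k hk =>
    int_of_bdd (hXsm k hk).aestronglyMeasurable (hbdd k hk)
  intro n
  induction n with
  | zero => simp [Yf, Wf]
  | succ n ih =>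
    set f : Ω → ℝ := fun ω => Real.exp (lam * Yf X n ω - lam ^ 2 * Wf μ 𝓕 X (n + 1) ω) with hf
    set g : Ω → ℝ := fun ω => Real.exp (lam * X (n + 1) ω) with hg
    have hYsucc : ∀ ω, Yf X (n + 1) ω = Yf X n ω + X (n + 1) ω := fun ω =>
      Finset.sum_Icc_succ_top (by omega) _
    have hWsucc : ∀ ω, Wf μ 𝓕 X (n + 1) ω = Wf μ 𝓕 X n ω + vv μ 𝓕 X (n + 1) ω := fun ω =>
      Finset.sum_Icc_succ_top (by omega) _
    have hsplit : (fun ω => Real.exp (lam * Yf X (n + 1) ω - lam ^ 2 * Wf μ 𝓕 X (n + 1) ω))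
        = f * g := by
      funext ω
      show _ = f ω * g ω
      simp only [hf, hg]
      rw [← Real.exp_add, hYsucc ω]
      ring_nf
    have hvv : vv μ 𝓕 X (n + 1) = μ[(fun ω => X (n + 1) ω ^ 2) | 𝓕 n] := by
      simp [vv]
    have hfsm : StronglyMeasurable[𝓕 n] f := by
      apply Continuous.comp_stronglyMeasurable Real.continuous_exp
      apply StronglyMeasurable.sub
      · apply StronglyMeasurable.const_mul
        apply Finset.stronglyMeasurable_fun_sum
        intro k hk
        have hk' := Finset.mem_Icc.1 hk
        exact (hadapt k hk'.1).mono (𝓕.mono (by omega))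
      · apply StronglyMeasurable.const_mul
        apply Finset.stronglyMeasurable_fun_sum
        intro k hk
        have hk' := Finset.mem_Icc.1 hk
        exact (stronglyMeasurable_condExp (m := 𝓕 (k - 1))).mono (𝓕.mono (by omega))
    have hfbdd : ∀ᵐ ω ∂μ, |f ω| ≤ Real.exp (lam * (n * R)) := by
      filter_upwards [hYbdd n, hW_nonneg (n + 1)] with ω h1 h2
      simp only [hf]
      rw [abs_of_pos (Real.exp_pos _), Real.exp_le_exp]
      have h3 := mul_le_mul_of_nonneg_left (abs_le.1 h1).2 hlam0
      nlinarith [sq_nonneg lam]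
    have hfint : Integrable f μ := int_of_bdd (hfsm.mono (𝓕.le n)).aestronglyMeasurable hfbdd
    have hgbdd : ∀ᵐ ω ∂μ, |g ω| ≤ Real.exp (lam * R) := by
      filter_upwards [hbdd (n + 1) (by omega)] with ω h
      simp only [hg]
      rw [abs_of_pos (Real.exp_pos _), Real.exp_le_exp]
      exact mul_le_mul_of_nonneg_left (abs_le.1 h).2 hlam0
    have hgsm : StronglyMeasurable g :=
      Continuous.comp_stronglyMeasurable Real.continuous_exp
        ((hXsm (n + 1) (by omega)).const_mul lam)
    have hgint : Integrable g μ := int_of_bdd hgsm.aestronglyMeasurable hgbdd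
    have hfgint : Integrable (f * g) μ := by
      refine int_of_bdd (C := Real.exp (lam * (n * R)) * Real.exp (lam * R))
        (((hfsm.mono (𝓕.le n)).mul hgsm).aestronglyMeasurable) ?_
      filter_upwards [hfbdd, hgbdd] with ω h1 h2
      rw [Pi.mul_apply, abs_mul]
      exact mul_le_mul h1 h2 (abs_nonneg _) (Real.exp_pos _).le
    -- conditional expectation bound on g
    have hBint : Integrable (lam • X (n + 1)) μ := (hXint (n + 1) (by omega)).smul lam
    have hCint : Integrable (lam ^ 2 • fun ω => X (n + 1) ω ^ 2) μ :=
      (hX2int (n + 1) (by omega)).smul (lam ^ 2)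
    have hAB : Integrable ((fun _ : Ω => (1 : ℝ)) + lam • X (n + 1)) μ :=
      (integrable_const 1).add hBint
    have hq_int : Integrable
        ((fun _ : Ω => (1 : ℝ)) + lam • X (n + 1) + lam ^ 2 • fun ω => X (n + 1) ω ^ 2) μ :=
      hAB.add hCint
    have hXc := hmean (n + 1) (by omega)
    simp only [Nat.add_sub_cancel] at hXc
    have h3 : μ[(fun _ : Ω => (1 : ℝ)) + lam • X (n + 1)
          + lam ^ 2 • (fun ω => X (n + 1) ω ^ 2) | 𝓕 n]
        =ᵐ[μ] fun ω => 1 + lam ^ 2 * vv μ 𝓕 X (n + 1) ω := by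
      have t1 := condExp_add (μ := μ) (m := 𝓕 n) hAB hCint
      have t2 := condExp_add (μ := μ) (m := 𝓕 n) (integrable_const (1 : ℝ)) hBint
      have t3 := condExp_smul (μ := μ) (m := 𝓕 n) lam (X (n + 1))
      have t4 := condExp_smul (μ := μ) (m := 𝓕 n) (lam ^ 2) (fun ω => X (n + 1) ω ^ 2)
      have t5 : μ[(fun _ : Ω => (1 : ℝ)) | 𝓕 n] = fun _ => 1 := condExp_const (𝓕.le n) 1
      filter_upwards [t1, t2, t3, t4, hXc] with ω e1 e2 e3 e4 e5
      rw [e1, Pi.add_apply, e2, Pi.add_apply, e3, e4, t5, hvv]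
      simp only [Pi.smul_apply, smul_eq_mul, Pi.zero_apply] at e5 ⊢
      rw [e5]
      ring
    have hcond : μ[g | 𝓕 n] ≤ᵐ[μ] fun ω => Real.exp (lam ^ 2 * vv μ 𝓕 X (n + 1) ω) := by
      have hq : g ≤ᵐ[μ] (fun _ : Ω => (1 : ℝ)) + lam • X (n + 1)
          + lam ^ 2 • fun ω => X (n + 1) ω ^ 2 := by
        filter_upwards [hbdd (n + 1) (by omega)] with ω h
        have habs : |lam * X (n + 1) ω| ≤ 1 := by
          rw [abs_mul, abs_of_nonneg hlam0]
          calc lam * |X (n + 1) ω| ≤ lam * R := mul_le_mul_of_nonneg_left h hlam0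
            _ ≤ 1 := hlamR
        have h5 := exp_quad habs
        simp only [hg, Pi.add_apply, Pi.smul_apply, smul_eq_mul]
        nlinarith [h5]
      have h2 := condExp_mono (m := 𝓕 n) hgint hq_int hq
      filter_upwards [h2, h3] with ω e2 e3
      rw [e3] at e2
      refine e2.trans ?_
      nlinarith [Real.add_one_le_exp (lam ^ 2 * vv μ 𝓕 X (n + 1) ω)]
    have pull := condExp_mul_of_stronglyMeasurable_left hfsm hfgint hgint
    have hfexpv_eq : (fun ω => f ω * Real.exp (lam ^ 2 * vv μ 𝓕 X (n + 1) ω))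
        = fun ω => Real.exp (lam * Yf X n ω - lam ^ 2 * Wf μ 𝓕 X n ω) := by
      funext ω
      simp only [hf]
      rw [← Real.exp_add, hWsucc ω]
      ring_nf
    have hfexpv_int : Integrable (fun ω => f ω * Real.exp (lam ^ 2 * vv μ 𝓕 X (n + 1) ω)) μ := by
      rw [hfexpv_eq]; exact hexp_int n
    have hgcond_nonneg : 0 ≤ᵐ[μ] μ[g | 𝓕 n] :=
      condExp_nonneg (ae_of_all μ fun ω => (Real.exp_pos _).le)
    have hfcg_int : Integrable (fun ω => f ω * (μ[g | 𝓕 n]) ω) μ := by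
      refine int_of_bdd (C := Real.exp (lam * (n * R)) * Real.exp (lam ^ 2 * R ^ 2))
        (((hfsm.mono (𝓕.le n)).mul
          ((stronglyMeasurable_condExp (m := 𝓕 n)).mono (𝓕.le n))).aestronglyMeasurable) ?_
      filter_upwards [hfbdd, hcond, hgcond_nonneg, hv_le (n + 1) (by omega)] with ω h1 h2 h4 h5
      rw [abs_mul]
      refine mul_le_mul h1 ?_ (abs_nonneg _) (Real.exp_pos _).le
      rw [abs_of_nonneg h4]
      refine h2.trans ?_
      rw [Real.exp_le_exp]
      exact mul_le_mul_of_nonneg_left h5 (sq_nonneg lam)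
    calc ∫ ω, Real.exp (lam * Yf X (n + 1) ω - lam ^ 2 * Wf μ 𝓕 X (n + 1) ω) ∂μ
        = ∫ ω, (f * g) ω ∂μ := by rw [hsplit]
      _ = ∫ ω, (μ[f * g | 𝓕 n]) ω ∂μ := (integral_condExp (𝓕.le n)).symm
      _ = ∫ ω, f ω * (μ[g | 𝓕 n]) ω ∂μ := integral_congr_ae pull
      _ ≤ ∫ ω, f ω * Real.exp (lam ^ 2 * vv μ 𝓕 X (n + 1) ω) ∂μ := by
          refine integral_mono_ae hfcg_int hfexpv_int ?_
          filter_upwards [hcond] with ω h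
          exact mul_le_mul_of_nonneg_left h (Real.exp_pos _).le
      _ = ∫ ω, Real.exp (lam * Yf X n ω - lam ^ 2 * Wf μ 𝓕 X n ω) ∂μ := by rw [hfexpv_eq]
      _ ≤ 1 := ih

lemma tail_bound
    (hadapt : ∀ k, 1 ≤ k → StronglyMeasurable[𝓕 k] (X k))
    (hbdd : ∀ k, 1 ≤ k → ∀ᵐ ω ∂μ, |X k ω| ≤ R)
    (hmean : ∀ k, 1 ≤ k → μ[X k | 𝓕 (k - 1)] =ᵐ[μ] 0)
    (hR : 0 ≤ R) {lam : ℝ} (hlam0 : 0 ≤ lam) (hlamR : lam * R ≤ 1) (n : ℕ) (t b : ℝ) :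
    μ {ω | t ≤ Yf X n ω ∧ Wf μ 𝓕 X n ω ≤ b}
      ≤ ENNReal.ofReal (Real.exp (lam ^ 2 * b - lam * t)) := by
  have hint := exp_int μ 𝓕 X R hadapt hbdd hlam0 n
  have hmgf := mgf_le_one μ 𝓕 X R hadapt hbdd hmean hR hlam0 hlamR n
  have hc : 0 < Real.exp (lam * t - lam ^ 2 * b) := Real.exp_pos _
  have hsub : {ω | t ≤ Yf X n ω ∧ Wf μ 𝓕 X n ω ≤ b} ⊆
      {ω | Real.exp (lam * t - lam ^ 2 * b)
        ≤ Real.exp (lam * Yf X n ω - lam ^ 2 * Wf μ 𝓕 X n ω)} := by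
    intro ω hω
    simp only [Set.mem_setOf_eq] at hω ⊢
    rw [Real.exp_le_exp]
    have h1 := mul_le_mul_of_nonneg_left hω.1 hlam0
    have h2 := mul_le_mul_of_nonneg_left hω.2 (sq_nonneg lam)
    linarith
  have hmar := mul_meas_ge_le_integral_of_nonneg
    (ae_of_all μ fun ω => (Real.exp_pos (lam * Yf X n ω - lam ^ 2 * Wf μ 𝓕 X n ω)).le)
    hint (Real.exp (lam * t - lam ^ 2 * b))
  have h1 : (μ {ω | Real.exp (lam * t - lam ^ 2 * b)
      ≤ Real.exp (lam * Yf X n ω - lam ^ 2 * Wf μ 𝓕 X n ω)}).toReal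
      ≤ Real.exp (lam ^ 2 * b - lam * t) := by
    have h2 : (μ {ω | Real.exp (lam * t - lam ^ 2 * b)
        ≤ Real.exp (lam * Yf X n ω - lam ^ 2 * Wf μ 𝓕 X n ω)}).toReal
        ≤ 1 / Real.exp (lam * t - lam ^ 2 * b) := by
      rw [le_div_iff₀ hc, mul_comm]
      exact hmar.trans hmgf
    calc _ ≤ 1 / Real.exp (lam * t - lam ^ 2 * b) := h2
      _ = Real.exp (lam ^ 2 * b - lam * t) := by
          rw [one_div, ← Real.exp_neg]; ring_nf
  calc μ {ω | t ≤ Yf X n ω ∧ Wf μ 𝓕 X n ω ≤ b} ≤ _ := measure_mono hsub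
    _ = ENNReal.ofReal ((μ _).toReal) := (ENNReal.ofReal_toReal (measure_ne_top μ _)).symm
    _ ≤ ENNReal.ofReal (Real.exp (lam ^ 2 * b - lam * t)) := ENNReal.ofReal_le_ofReal h1

lemma tail_bound_neg
    (hadapt : ∀ k, 1 ≤ k → StronglyMeasurable[𝓕 k] (X k))
    (hbdd : ∀ k, 1 ≤ k → ∀ᵐ ω ∂μ, |X k ω| ≤ R)
    (hmean : ∀ k, 1 ≤ k → μ[X k | 𝓕 (k - 1)] =ᵐ[μ] 0)
    (hR : 0 ≤ R) {lam : ℝ} (hlam0 : 0 ≤ lam) (hlamR : lam * R ≤ 1) (n : ℕ) (t b : ℝ) :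
    μ {ω | t ≤ -Yf X n ω ∧ Wf μ 𝓕 X n ω ≤ b}
      ≤ ENNReal.ofReal (Real.exp (lam ^ 2 * b - lam * t)) := by
  have hYneg : ∀ ω, Yf (fun k => -X k) n ω = -Yf X n ω := by
    intro ω; simp [Yf]
  have hvneg : ∀ k, vv μ 𝓕 (fun k => -X k) k = vv μ 𝓕 X k := by
    intro k
    have he : (fun ω' => ((-X k) ω') ^ 2) = fun ω' => (X k ω') ^ 2 := by
      funext ω'; simp
    simp only [vv, he]
  have hWneg : ∀ ω, Wf μ 𝓕 (fun k => -X k) n ω = Wf μ 𝓕 X n ω := by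
    intro ω
    simp only [Wf]
    exact Finset.sum_congr rfl fun k _ => by rw [hvneg k]
  have h := tail_bound μ 𝓕 (fun k => -X k) R
    (fun k hk => (hadapt k hk).neg)
    (fun k hk => by filter_upwards [hbdd k hk] with ω h; simpa using h)
    (fun k hk => by
      refine (condExp_neg (X k) _).trans ?_
      filter_upwards [hmean k hk] with ω h
      simp only [Pi.neg_apply, Pi.zero_apply] at h ⊢
      rw [h]; simp)
    hR hlam0 hlamR n t b
  have hset : {ω | t ≤ Yf (fun k => -X k) n ω ∧ Wf μ 𝓕 (fun k => -X k) n ω ≤ b}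
      = {ω | t ≤ -Yf X n ω ∧ Wf μ 𝓕 X n ω ≤ b} := by
    ext ω; rw [Set.mem_setOf_eq, Set.mem_setOf_eq, hYneg ω, hWneg ω]
  rwa [hset] at h


end Core

end FreedmanAux


open FreedmanAux

/-- **Freedman's inequality** (user-friendly version, Theorem 4 of the paper).
Let `𝓕` be a filtration and `X k` a martingale-difference sequence (for `k ≥ 1`):
`X k` is `𝓕 k`-measurable, `|X k| ≤ R` a.s., and `E[X k | 𝓕 (k-1)] = 0` a.s.
Let `W j = ∑_{k=1}^j E[X k ^ 2 | 𝓕 (k-1)]` and assume `W n ≤ σ²` a.s.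
Then for every `δ ∈ (0,1)` and integer `m ≥ 1`, with probability at least `1 - δ`,
`|∑_{k=1}^n X k| ≤ √(8 max{W n, σ²/2^m} log(2m/δ)) + (4/3) R log(2m/δ)`. -/
theorem freedman_inequality_user_friendly
    {Ω : Type} [m0 : MeasurableSpace Ω] (μ : Measure Ω) [IsProbabilityMeasure μ]
    (𝓕 : Filtration ℕ m0)
    (X : ℕ → Ω → ℝ) (R σ2 : ℝ) (n : ℕ)
    (hadapt : ∀ k : ℕ, 1 ≤ k → StronglyMeasurable[𝓕 k] (X k))
    (hbdd : ∀ k : ℕ, 1 ≤ k → ∀ᵐ ω ∂μ, |X k ω| ≤ R)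
    (hmean : ∀ k : ℕ, 1 ≤ k → μ[X k | 𝓕 (k - 1)] =ᵐ[μ] 0)
    (W : ℕ → Ω → ℝ)
    (hW : ∀ j ω, W j ω = ∑ k ∈ Finset.Icc 1 j, (μ[fun ω' => (X k ω') ^ 2 | 𝓕 (k - 1)]) ω)
    (hvar : ∀ᵐ ω ∂μ, W n ω ≤ σ2)
    (δ : ℝ) (hδ₁ : 0 < δ) (hδ₂ : δ < 1) (m : ℕ) (hm : 1 ≤ m) :
    1 - δ ≤ (μ {ω | |∑ k ∈ Finset.Icc 1 n, X k ω| ≤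
        Real.sqrt (8 * max (W n ω) (σ2 / 2 ^ m) * Real.log (2 * m / δ))
          + (4 / 3) * R * Real.log (2 * m / δ)}).toReal := by
  classical
  obtain ⟨ω0, hω0⟩ := (hbdd 1 le_rfl).exists
  have hR : 0 ≤ R := le_trans (abs_nonneg _) hω0
  have hm' : (1:ℝ) ≤ m := by exact_mod_cast hm
  have hL : 0 < Real.log (2 * m / δ) := by
    apply Real.log_pos
    rw [lt_div_iff₀ hδ₁]
    nlinarith
  set L := Real.log (2 * m / δ) with hLdef
  have hWeq : W n = Wf μ 𝓕 X n := funext fun ω => hW n ω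
  have hset : {ω | |∑ k ∈ Finset.Icc 1 n, X k ω| ≤
        Real.sqrt (8 * max (W n ω) (σ2 / 2 ^ m) * L) + (4 / 3) * R * L}
      = {ω | |Yf X n ω| ≤
        Real.sqrt (8 * max (Wf μ 𝓕 X n ω) (σ2 / 2 ^ m) * L) + 4 / 3 * R * L} := by
    rw [hWeq]; rfl
  rw [hset]
  set s : Set Ω := {ω | |Yf X n ω| ≤
      Real.sqrt (8 * max (Wf μ 𝓕 X n ω) (σ2 / 2 ^ m) * L) + 4 / 3 * R * L} with hs
  have hYmeas : Measurable (Yf X n) :=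
    (Finset.stronglyMeasurable_fun_sum _ fun k hk =>
      (hadapt k (Finset.mem_Icc.1 hk).1).mono (𝓕.le k)).measurable
  have hWmeas : Measurable (Wf μ 𝓕 X n) :=
    (Finset.stronglyMeasurable_fun_sum _ fun k _ =>
      (stronglyMeasurable_condExp (m := 𝓕 (k - 1))).mono (𝓕.le _)).measurable
  have hsm : MeasurableSet s := by
    apply measurableSet_le hYmeas.abs
    apply Measurable.add_const _ (4 / 3 * R * L)
    exact Real.continuous_sqrt.measurable.comp
      (((measurable_const.mul (hWmeas.max measurable_const)).mul_const L))
  suffices hGc : μ sᶜ ≤ ENNReal.ofReal δ by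
    have h1 := measure_add_measure_compl (μ := μ) hsm
    have h2 : (μ sᶜ).toReal ≤ δ := ENNReal.toReal_le_of_le_ofReal hδ₁.le hGc
    have h3 : (μ s).toReal + (μ sᶜ).toReal = 1 := by
      rw [← ENNReal.toReal_add (measure_ne_top μ _) (measure_ne_top μ _), h1, measure_univ,
        ENNReal.toReal_one]
    linarith
  by_cases hσ2 : σ2 ≤ 0
  · -- degenerate case: all increments vanish a.e.
    have hXsm : ∀ k, 1 ≤ k → StronglyMeasurable (X k) := fun k hk => (hadapt k hk).mono (𝓕.le k)
    have hX2int : ∀ k, 1 ≤ k → Integrable (fun ω => X k ω ^ 2) μ := by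
      intro k hk
      refine int_of_bdd (C := R ^ 2) ((hXsm k hk).pow 2).aestronglyMeasurable ?_
      filter_upwards [hbdd k hk] with ω h
      rw [abs_pow]
      exact pow_le_pow_left₀ (abs_nonneg _) h 2
    have hWint : Integrable (Wf μ 𝓕 X n) μ :=
      integrable_finset_sum _ fun k _ => integrable_condExp
    have hWle : ∫ ω, Wf μ 𝓕 X n ω ∂μ ≤ 0 := by
      have hv' : ∀ᵐ ω ∂μ, Wf μ 𝓕 X n ω ≤ σ2 := hWeq ▸ hvar
      have := integral_mono_ae hWint (integrable_const σ2) hv'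
      simp only [integral_const, measure_univ, probReal_univ, ENNReal.toReal_one, smul_eq_mul, one_mul] at this
      linarith
    have hsum : ∫ ω, Wf μ 𝓕 X n ω ∂μ = ∑ k ∈ Finset.Icc 1 n, ∫ ω, vv μ 𝓕 X k ω ∂μ :=
      integral_finset_sum _ fun k _ => integrable_condExp
    have hterm : ∀ j ∈ Finset.Icc 1 n, 0 ≤ ∫ ω, vv μ 𝓕 X j ω ∂μ := fun j _ =>
      integral_nonneg_of_ae (condExp_nonneg (ae_of_all μ fun ω => sq_nonneg (X j ω)))
    have hXzero : ∀ k, k ∈ Finset.Icc 1 n → X k =ᵐ[μ] 0 := by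
      intro k hk
      have hk1 := (Finset.mem_Icc.1 hk).1
      have hzero : ∫ ω, vv μ 𝓕 X k ω ∂μ = 0 := by
        refine le_antisymm ?_ (hterm k hk)
        have hsingle := Finset.single_le_sum hterm hk
        rw [← hsum] at hsingle
        linarith
      have hX2 : ∫ ω, X k ω ^ 2 ∂μ = 0 := by
        rw [← integral_condExp (𝓕.le (k - 1))]
        exact hzero
      have h0 := (integral_eq_zero_iff_of_nonneg (fun ω => sq_nonneg (X k ω))
        (hX2int k hk1)).1 hX2
      filter_upwards [h0] with ω h
      simp only [Pi.zero_apply] at h ⊢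
      exact pow_eq_zero_iff (n := 2) (by norm_num) |>.1 h
    have hYzero : ∀ᵐ ω ∂μ, Yf X n ω = 0 := by
      have hall : ∀ᵐ ω ∂μ, ∀ k ∈ Finset.Icc 1 n, X k ω = 0 := by
        rw [Filter.eventually_all_finset]
        intro k hk
        filter_upwards [hXzero k hk] with ω h using h
      filter_upwards [hall] with ω h
      exact Finset.sum_eq_zero h
    have hae : ∀ᵐ ω ∂μ, ω ∈ s := by
      filter_upwards [hYzero] with ω h
      rw [hs, Set.mem_setOf_eq, h, abs_zero]
      have h1 : 0 ≤ 4 / 3 * R * L := by positivity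
      linarith [Real.sqrt_nonneg (8 * max (Wf μ 𝓕 X n ω) (σ2 / 2 ^ m) * L)]
    have h0 : μ sᶜ = 0 := by
      have h1 := Filter.eventually_iff.1 hae
      rw [Set.setOf_mem_eq] at h1
      exact mem_ae_iff.1 h1
    simp [h0]
  · push_neg at hσ2
    set b : ℕ → ℝ := fun j => σ2 / 2 ^ (j - 1) with hb
    set t : ℕ → ℝ := fun j => 2 * Real.sqrt (b j * L) + 4 / 3 * R * L with ht
    set A : ℕ → Set Ω := fun j =>
      {ω | t j ≤ Yf X n ω ∧ Wf μ 𝓕 X n ω ≤ b j}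
        ∪ {ω | t j ≤ -Yf X n ω ∧ Wf μ 𝓕 X n ω ≤ b j} with hA
    have hAle : ∀ j, 1 ≤ j → μ (A j) ≤ ENNReal.ofReal (δ / m) := by
      intro j hj
      have hbj : 0 < b j := by rw [hb]; positivity
      obtain ⟨lam, hlam0, hlamR, hval⟩ := choose_lam hR hbj hL
      have hval' : lam ^ 2 * b j - lam * t j ≤ -L := by
        rw [ht]; exact hval
      have h1 := tail_bound μ 𝓕 X R hadapt hbdd hmean hR hlam0 hlamR n (t j) (b j)
      have h2 := tail_bound_neg μ 𝓕 X R hadapt hbdd hmean hR hlam0 hlamR n (t j) (b j)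
      have hexp : Real.exp (lam ^ 2 * b j - lam * t j) ≤ δ / (2 * m) := by
        calc Real.exp (lam ^ 2 * b j - lam * t j) ≤ Real.exp (-L) := Real.exp_le_exp.2 hval'
          _ = δ / (2 * m) := by
              rw [hLdef, Real.exp_neg, Real.exp_log (by positivity), inv_div]
      calc μ (A j) ≤ μ {ω | t j ≤ Yf X n ω ∧ Wf μ 𝓕 X n ω ≤ b j}
            + μ {ω | t j ≤ -Yf X n ω ∧ Wf μ 𝓕 X n ω ≤ b j} := measure_union_le _ _
        _ ≤ ENNReal.ofReal (δ / (2 * m)) + ENNReal.ofReal (δ / (2 * m)) :=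
            add_le_add (h1.trans (ENNReal.ofReal_le_ofReal hexp))
              (h2.trans (ENNReal.ofReal_le_ofReal hexp))
        _ = ENNReal.ofReal (δ / m) := by
            rw [← ENNReal.ofReal_add (by positivity) (by positivity)]
            congr 1
            have hm0 : (m : ℝ) ≠ 0 := by positivity
            field_simp
            ring
    have hincl : ∀ᵐ ω ∂μ, ω ∈ sᶜ → ω ∈ ⋃ j ∈ Finset.Icc 1 m, A j := by
      have hvar' : ∀ᵐ ω ∂μ, Wf μ 𝓕 X n ω ≤ σ2 := hWeq ▸ hvar
      filter_upwards [hvar'] with ω hWω hmem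
      rw [Set.mem_compl_iff, hs, Set.mem_setOf_eq, not_le] at hmem
      have hM1 : σ2 / 2 ^ m ≤ max (Wf μ 𝓕 X n ω) (σ2 / 2 ^ m) := le_max_right _ _
      have hM2 : max (Wf μ 𝓕 X n ω) (σ2 / 2 ^ m) ≤ σ2 := by
        apply max_le hWω
        apply div_le_self hσ2.le
        exact one_le_pow₀ (by norm_num)
      obtain ⟨j, hj1, hjm, hjlo, hjhi⟩ :=
        find_scale σ2 (max (Wf μ 𝓕 X n ω) (σ2 / 2 ^ m)) m hm hM1 hM2
      have hWb : Wf μ 𝓕 X n ω ≤ b j := (le_max_left _ _).trans hjhi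
      have hbj2M : b j ≤ 2 * max (Wf μ 𝓕 X n ω) (σ2 / 2 ^ m) := by
        rw [hb]
        have h2j : (2:ℝ) ^ j = 2 ^ (j - 1) * 2 := by
          rw [← pow_succ]
          congr 1
          omega
        rw [div_le_iff₀ (by positivity)] at hjlo
        rw [div_le_iff₀ (by positivity : (0:ℝ) < 2 ^ (j - 1))]
        nlinarith [hjlo]
      have htj : t j ≤ |Yf X n ω| := by
        have hMnn : 0 ≤ max (Wf μ 𝓕 X n ω) (σ2 / 2 ^ m) := le_trans (by positivity) hM1
        have h4 : 4 * (b j * L) ≤ 8 * max (Wf μ 𝓕 X n ω) (σ2 / 2 ^ m) * L := by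
          nlinarith [mul_le_mul_of_nonneg_right hbj2M hL.le]
        have hsq : Real.sqrt (4 * (b j * L)) = 2 * Real.sqrt (b j * L) := by
          rw [show (4:ℝ) * (b j * L) = 2 ^ 2 * (b j * L) by ring,
            Real.sqrt_mul (show (0:ℝ) ≤ 2 ^ 2 by norm_num) (b j * L),
            Real.sqrt_sq (show (0:ℝ) ≤ 2 by norm_num)]
        have h5 := Real.sqrt_le_sqrt h4
        have hteq : t j = 2 * Real.sqrt (b j * L) + 4 / 3 * R * L := by simp only [ht]
        rw [hteq, ← hsq]
        linarith [hmem.le, h5]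
      rcases le_abs.1 htj with hcase | hcase
      · exact Set.mem_biUnion (Finset.mem_Icc.2 ⟨hj1, hjm⟩) (Or.inl ⟨hcase, hWb⟩)
      · exact Set.mem_biUnion (Finset.mem_Icc.2 ⟨hj1, hjm⟩) (Or.inr ⟨hcase, hWb⟩)
    calc μ sᶜ ≤ μ (⋃ j ∈ Finset.Icc 1 m, A j) := measure_mono_ae hincl
      _ ≤ ∑ j ∈ Finset.Icc 1 m, μ (A j) := measure_biUnion_finset_le _ _
      _ ≤ ∑ j ∈ Finset.Icc 1 m, ENNReal.ofReal (δ / m) :=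
          Finset.sum_le_sum fun j hj => hAle j (Finset.mem_Icc.1 hj).1
      _ = m * ENNReal.ofReal (δ / m) := by
          rw [Finset.sum_const, Nat.card_Icc]
          simp [nsmul_eq_mul]
      _ = ENNReal.ofReal δ := by
          rw [← ENNReal.ofReal_natCast m, ← ENNReal.ofReal_mul (by positivity)]
          congr 1
          have hm0 : (m : ℝ) ≠ 0 := by positivity
          field_simp
end

section
/- (Telescoping of the reference-advantage bonus.) In the Q-EarlySettled-Advantage algorithm, for every episode k and step h, writing N = N_h^k(s_h^k, a_h^k) ≥ 1 and k^n = k_h^n(s_h^k, a_h^k), the weighted sum of the bonuses b_h^{R,k^n+1} used in the reference-advantage updates satisfies B_h^{R,k^N+1}(s_h^k, a_h^k) + c_b·H²·log(SAT/δ)/N^{3/4} ≤ Σ_{n=1}^{N} η_n^N · b_h^{R,k^n+1} ≤ B_h^{R,k^N+1}(s_h^k, a_h^k) + 2·c_b·H²·log(SAT/δ)/N^{3/4}. -/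
open MeasureTheory Finset

/-- A finite-horizon MDP with horizon `H`, non-stationary transition kernels `P h s a ·`,
and deterministic rewards `r h s a ∈ [0,1]`. -/
structure MDP (S A : Type) [Fintype S] [Fintype A] where
  H : ℕ
  P : ℕ → S → A → S → ℝ
  r : ℕ → S → A → ℝ
  H_pos : 1 ≤ H
  P_nonneg : ∀ h s a s', 0 ≤ P h s a s'
  P_sum_one : ∀ h s a, ∑ s', P h s a s' = 1
  r_nonneg : ∀ h s a, 0 ≤ r h s a
  r_le_one : ∀ h s a, r h s a ≤ 1

namespace MDP

variable {S A : Type} [Fintype S] [Fintype A] [Nonempty S] [Nonempty A]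

/-- Optimal Q-function, defined by backward induction on the remaining number of steps
(`Qstar` below instantiates the fuel as `H + 1 - h`, so that values at step `H + 1`
vanish and the Bellman optimality equation holds for `1 ≤ h ≤ H`). -/
noncomputable def QstarAux (M : MDP S A) : ℕ → ℕ → S → A → ℝ
  | 0, _, _, _ => 0
  | (fuel + 1), h, s, a =>
      M.r h s a + ∑ s' : S, M.P h s a s' *
        (Finset.univ.sup' Finset.univ_nonempty fun a' => QstarAux M fuel (h + 1) s' a')

/-- The optimal Q-function `Q_h^⋆`. -/
noncomputable def Qstar (M : MDP S A) (h : ℕ) (s : S) (a : A) : ℝ :=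
  QstarAux M (M.H + 1 - h) h s a

/-- The optimal value function `V_h^⋆`. -/
noncomputable def Vstar (M : MDP S A) (h : ℕ) (s : S) : ℝ :=
  Finset.univ.sup' Finset.univ_nonempty fun a => M.Qstar h s a

/-- Value function `V_h^π` of a deterministic policy `π`, by backward induction. -/
noncomputable def VpolAux (M : MDP S A) (π : ℕ → S → A) : ℕ → ℕ → S → ℝ
  | 0, _, _ => 0
  | (fuel + 1), h, s =>
      M.r h s (π h s) + ∑ s' : S, M.P h s (π h s) s' * VpolAux M π fuel (h + 1) s'

/-- The value function `V_h^π` of a deterministic policy `π`. -/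
noncomputable def Vpol (M : MDP S A) (π : ℕ → S → A) (h : ℕ) (s : S) : ℝ :=
  VpolAux M π (M.H + 1 - h) h s

/-- Conditional variance `Var_{h,s,a}(V) = P_{h,s,a}(V²) - (P_{h,s,a} V)²`. -/
noncomputable def varP (M : MDP S A) (h : ℕ) (s : S) (a : A) (V : S → ℝ) : ℝ :=
  (∑ s' : S, M.P h s a s' * (V s') ^ 2) - (∑ s' : S, M.P h s a s' * V s') ^ 2

end MDP

/-- The Q-learning rate `η_n = (H+1)/(H+n)`. -/
noncomputable def lr (H n : ℕ) : ℝ := (H + 1 : ℝ) / (H + n)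

/-- `η_n^N`: equal to `η_n ∏_{i=n+1}^N (1 - η_i)` for `1 ≤ n ≤ N` (hence `η_n` for `N = n`),
`0` for `N < n`, and `η_0^N = ∏_{i=1}^N (1 - η_i)` (which is `1` if `N = 0` and `0` otherwise,
since `1 - η_1 = 0`). -/
noncomputable def lrProd (H n N : ℕ) : ℝ :=
  if N < n then 0
  else (if n = 0 then 1 else lr H n) * ∏ i ∈ Finset.Icc (n + 1) N, (1 - lr H i)

/-- The log factor `log(SAT/δ)` with `T = KH`. -/
noncomputable def iota (S A : Type) [Fintype S] [Fintype A] (K H : ℕ) (δ : ℝ) : ℝ :=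
  Real.log ((Fintype.card S : ℝ) * (Fintype.card A) * (K * H) / δ)

/-- The trajectory `(s_h^k, a_h^k)` is generated by online interaction with the MDP `M`:
states and actions are adapted to the filtration `𝓕` (with time index `(k-1)H + h`
corresponding to step `h` of episode `k`), and conditionally on the history,
`s_{h+1}^k ∼ P_h(· | s_h^k, a_h^k)`. -/
def IsMDPTrajectory {S A : Type} [Fintype S] [Fintype A] [DecidableEq S]
    [MeasurableSpace S] [MeasurableSpace A]
    {Ω : Type} [m0 : MeasurableSpace Ω] (μ : Measure Ω)
    (M : MDP S A) (K : ℕ) (𝓕 : Filtration ℕ m0)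
    (st : ℕ → ℕ → Ω → S) (ac : ℕ → ℕ → Ω → A) : Prop :=
  (∀ k ∈ Finset.Icc 1 K, ∀ h ∈ Finset.Icc 1 (M.H + 1),
      Measurable[𝓕 ((k - 1) * M.H + h)] (st k h)) ∧
  (∀ k ∈ Finset.Icc 1 K, ∀ h ∈ Finset.Icc 1 M.H,
      Measurable[𝓕 ((k - 1) * M.H + h)] (ac k h)) ∧
  (∀ k ∈ Finset.Icc 1 K, ∀ h ∈ Finset.Icc 1 M.H, ∀ s' : S,
      μ[(fun ω => if st k (h + 1) ω = s' then (1 : ℝ) else 0) | 𝓕 ((k - 1) * M.H + h)]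
        =ᵐ[μ] fun ω => M.P h (st k h ω) (ac k h ω) s')

/-- The **Q-EarlySettled-Advantage** algorithm (Algorithms 1–2 of the paper), run for `K`
episodes on the MDP `M` with bonus constant `cb` and failure probability `δ`.
The fields record the trajectory `(s_h^k, a_h^k)`, the greedy policies `π^k`, the visit
counters, all Q/value estimates and auxiliary statistics, together with the initialization
and update equations defining the algorithm.  A quantity carrying episode index `k`
denotes its value at the *beginning* of episode `k` (`N k` is the counter at the *end*
of episode `k`, with `N 0 = 0`); `kvis n h s a` is the episode of the `n`-th visit of
`(s,a)` at step `h`. -/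
structure QLAlg {S A : Type} [Fintype S] [Fintype A] [Nonempty S] [Nonempty A]
    [DecidableEq S] [DecidableEq A] (M : MDP S A) (K : ℕ) (cb δ : ℝ) where
  /-- `s_h^k` : the state visited at step `h` of episode `k` -/
  st : ℕ → ℕ → S
  /-- `a_h^k` : the action taken at step `h` of episode `k` -/
  ac : ℕ → ℕ → A
  /-- `π^k` : the greedy policy executed during episode `k` -/
  pol : ℕ → ℕ → S → A
  /-- `N_h^k(s,a)` : number of visits of `(s,a)` at step `h` by the end of episode `k` -/
  N : ℕ → ℕ → S → A → ℕ
  /-- the combined Q-estimate `Q_h^k` -/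
  Q : ℕ → ℕ → S → A → ℝ
  /-- the Hoeffding-bonus optimistic estimate `Q_h^{UCB,k}` -/
  QUCB : ℕ → ℕ → S → A → ℝ
  /-- the pessimistic estimate `Q_h^{LCB,k}` -/
  QLCB : ℕ → ℕ → S → A → ℝ
  /-- the reference-advantage estimate `Q_h^{R,k}` -/
  QR : ℕ → ℕ → S → A → ℝ
  /-- `V_h^k` -/
  V : ℕ → ℕ → S → ℝ
  /-- `V_h^{LCB,k}` -/
  VLCB : ℕ → ℕ → S → ℝ
  /-- the reference value `V_h^{R,k}` -/
  VR : ℕ → ℕ → S → ℝ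
  /-- the flag `u_ref^k` governing the final reference update -/
  uref : ℕ → ℕ → S → Prop
  /-- running mean `μ_h^{ref,k}` of the reference -/
  muRef : ℕ → ℕ → S → A → ℝ
  /-- running second moment `σ_h^{ref,k}` of the reference -/
  sigRef : ℕ → ℕ → S → A → ℝ
  /-- running weighted mean `μ_h^{adv,k}` of the advantage -/
  muAdv : ℕ → ℕ → S → A → ℝ
  /-- running weighted second moment `σ_h^{adv,k}` of the advantage -/
  sigAdv : ℕ → ℕ → S → A → ℝ
  /-- the aggregated bonus `B_h^{R,k}` -/
  BR : ℕ → ℕ → S → A → ℝ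
  /-- the bonus difference `δ_h^{R,k}` -/
  dR : ℕ → ℕ → S → A → ℝ
  /-- `bR k h` : the exploration bonus `b_h^R` computed at step `h` of episode `k` -/
  bR : ℕ → ℕ → ℝ
  /-- `kvis n h s a = k_h^n(s,a)` : the episode of the `n`-th visit of `(s,a)` at step `h` -/
  kvis : ℕ → ℕ → S → A → ℕ
  greedy : ∀ k h s a, Q k h s a ≤ Q k h s (pol k h s)
  act_eq : ∀ k h, ac k h = pol k h (st k h)
  N_init : ∀ h s a, N 0 h s a = 0
  N_upd : ∀ k ∈ Icc 1 K, ∀ h ∈ Icc 1 M.H, ∀ s a,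
    N k h s a = N (k - 1) h s a + (if s = st k h ∧ a = ac k h then 1 else 0)
  Q_init : ∀ h ∈ Icc 1 M.H, ∀ s a, Q 1 h s a = M.H
  QUCB_init : ∀ h ∈ Icc 1 M.H, ∀ s a, QUCB 1 h s a = M.H
  QR_init : ∀ h ∈ Icc 1 M.H, ∀ s a, QR 1 h s a = M.H
  QLCB_init : ∀ h ∈ Icc 1 M.H, ∀ s a, QLCB 1 h s a = 0
  V_init : ∀ h ∈ Icc 1 M.H, ∀ s, V 1 h s = M.H
  VR_init : ∀ h ∈ Icc 1 M.H, ∀ s, VR 1 h s = M.H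
  VLCB_init : ∀ h ∈ Icc 1 M.H, ∀ s, VLCB 1 h s = 0
  uref_init : ∀ h s, uref 1 h s
  mom_init : ∀ h s a, muRef 1 h s a = 0 ∧ sigRef 1 h s a = 0 ∧ muAdv 1 h s a = 0 ∧
    sigAdv 1 h s a = 0 ∧ BR 1 h s a = 0 ∧ dR 1 h s a = 0
  V_terminal : ∀ k s, V k (M.H + 1) s = 0 ∧ VR k (M.H + 1) s = 0 ∧ VLCB k (M.H + 1) s = 0
  QUCB_upd : ∀ k ∈ Icc 1 K, ∀ h ∈ Icc 1 M.H, ∀ s a,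
    QUCB (k + 1) h s a =
      if s = st k h ∧ a = ac k h then
        (1 - lr M.H (N k h s a)) * QUCB k h s a
          + lr M.H (N k h s a) *
            (M.r h s a + V k (h + 1) (st k (h + 1))
              + cb * Real.sqrt ((M.H : ℝ) ^ 3 * iota S A K M.H δ / (N k h s a)))
      else QUCB k h s a
  QLCB_upd : ∀ k ∈ Icc 1 K, ∀ h ∈ Icc 1 M.H, ∀ s a,
    QLCB (k + 1) h s a =
      if s = st k h ∧ a = ac k h then
        (1 - lr M.H (N k h s a)) * QLCB k h s a
          + lr M.H (N k h s a) *
            (M.r h s a + VLCB k (h + 1) (st k (h + 1))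
              - cb * Real.sqrt ((M.H : ℝ) ^ 3 * iota S A K M.H δ / (N k h s a)))
      else QLCB k h s a
  muRef_upd : ∀ k ∈ Icc 1 K, ∀ h ∈ Icc 1 M.H, ∀ s a,
    muRef (k + 1) h s a =
      if s = st k h ∧ a = ac k h then
        (1 - 1 / (N k h s a : ℝ)) * muRef k h s a
          + (1 / (N k h s a : ℝ)) * VR k (h + 1) (st k (h + 1))
      else muRef k h s a
  sigRef_upd : ∀ k ∈ Icc 1 K, ∀ h ∈ Icc 1 M.H, ∀ s a,
    sigRef (k + 1) h s a =
      if s = st k h ∧ a = ac k h then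
        (1 - 1 / (N k h s a : ℝ)) * sigRef k h s a
          + (1 / (N k h s a : ℝ)) * (VR k (h + 1) (st k (h + 1))) ^ 2
      else sigRef k h s a
  muAdv_upd : ∀ k ∈ Icc 1 K, ∀ h ∈ Icc 1 M.H, ∀ s a,
    muAdv (k + 1) h s a =
      if s = st k h ∧ a = ac k h then
        (1 - lr M.H (N k h s a)) * muAdv k h s a
          + lr M.H (N k h s a) * (V k (h + 1) (st k (h + 1)) - VR k (h + 1) (st k (h + 1)))
      else muAdv k h s a
  sigAdv_upd : ∀ k ∈ Icc 1 K, ∀ h ∈ Icc 1 M.H, ∀ s a,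
    sigAdv (k + 1) h s a =
      if s = st k h ∧ a = ac k h then
        (1 - lr M.H (N k h s a)) * sigAdv k h s a
          + lr M.H (N k h s a) *
              (V k (h + 1) (st k (h + 1)) - VR k (h + 1) (st k (h + 1))) ^ 2
      else sigAdv k h s a
  BR_upd : ∀ k ∈ Icc 1 K, ∀ h ∈ Icc 1 M.H, ∀ s a,
    BR (k + 1) h s a =
      if s = st k h ∧ a = ac k h then
        cb * Real.sqrt (iota S A K M.H δ / (N k h s a)) *
          (Real.sqrt (sigRef (k + 1) h s a - (muRef (k + 1) h s a) ^ 2)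
            + Real.sqrt (M.H) * Real.sqrt (sigAdv (k + 1) h s a - (muAdv (k + 1) h s a) ^ 2))
      else BR k h s a
  dR_upd : ∀ k ∈ Icc 1 K, ∀ h ∈ Icc 1 M.H, ∀ s a,
    dR (k + 1) h s a =
      if s = st k h ∧ a = ac k h then BR (k + 1) h s a - BR k h s a else dR k h s a
  bR_def : ∀ k ∈ Icc 1 K, ∀ h ∈ Icc 1 M.H,
    bR k h = BR (k + 1) h (st k h) (ac k h)
      + (1 - lr M.H (N k h (st k h) (ac k h))) * dR (k + 1) h (st k h) (ac k h)
          / lr M.H (N k h (st k h) (ac k h))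
      + cb * (M.H : ℝ) ^ 2 * iota S A K M.H δ
          / (N k h (st k h) (ac k h) : ℝ) ^ ((3 : ℝ) / 4)
  QR_upd : ∀ k ∈ Icc 1 K, ∀ h ∈ Icc 1 M.H, ∀ s a,
    QR (k + 1) h s a =
      if s = st k h ∧ a = ac k h then
        (1 - lr M.H (N k h s a)) * QR k h s a
          + lr M.H (N k h s a) *
            (M.r h s a + V k (h + 1) (st k (h + 1)) - VR k (h + 1) (st k (h + 1))
              + muRef (k + 1) h s a + bR k h)
      else QR k h s a
  Q_upd : ∀ k ∈ Icc 1 K, ∀ h ∈ Icc 1 M.H, ∀ s a,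
    Q (k + 1) h s a =
      if s = st k h ∧ a = ac k h then
        min (QR (k + 1) h s a) (min (QUCB (k + 1) h s a) (Q k h s a))
      else Q k h s a
  V_upd : ∀ k ∈ Icc 1 K, ∀ h ∈ Icc 1 M.H, ∀ s,
    V (k + 1) h s =
      if s = st k h then Finset.univ.sup' Finset.univ_nonempty (fun a => Q (k + 1) h s a)
      else V k h s
  VLCB_upd : ∀ k ∈ Icc 1 K, ∀ h ∈ Icc 1 M.H, ∀ s,
    VLCB (k + 1) h s =
      if s = st k h then
        max (Finset.univ.sup' Finset.univ_nonempty (fun a => QLCB (k + 1) h s a)) (VLCB k h s)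
      else VLCB k h s
  VR_upd_pos : ∀ k ∈ Icc 1 K, ∀ h ∈ Icc 1 M.H,
    (1 < V (k + 1) h (st k h) - VLCB (k + 1) h (st k h) ∨ uref k h (st k h)) →
      VR (k + 1) h (st k h) = V (k + 1) h (st k h)
  VR_upd_neg : ∀ k ∈ Icc 1 K, ∀ h ∈ Icc 1 M.H,
    ¬(1 < V (k + 1) h (st k h) - VLCB (k + 1) h (st k h) ∨ uref k h (st k h)) →
      VR (k + 1) h (st k h) = VR k h (st k h)
  VR_upd_other : ∀ k ∈ Icc 1 K, ∀ h ∈ Icc 1 M.H, ∀ s, s ≠ st k h →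
    VR (k + 1) h s = VR k h s
  uref_upd_pos : ∀ k ∈ Icc 1 K, ∀ h ∈ Icc 1 M.H,
    1 < V (k + 1) h (st k h) - VLCB (k + 1) h (st k h) → uref (k + 1) h (st k h)
  uref_upd_neg : ∀ k ∈ Icc 1 K, ∀ h ∈ Icc 1 M.H,
    ¬(1 < V (k + 1) h (st k h) - VLCB (k + 1) h (st k h)) → ¬uref (k + 1) h (st k h)
  uref_upd_other : ∀ k ∈ Icc 1 K, ∀ h ∈ Icc 1 M.H, ∀ s, s ≠ st k h →
    (uref (k + 1) h s ↔ uref k h s)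
  kvis_spec : ∀ h ∈ Icc 1 M.H, ∀ s a n, 1 ≤ n → n ≤ N K h s a →
    kvis n h s a ∈ Icc 1 K ∧ N (kvis n h s a) h s a = n ∧
      st (kvis n h s a) h = s ∧ ac (kvis n h s a) h = a

namespace TelAux


noncomputable def Pf (H N n : ℕ) : ℝ := ∏ i ∈ Finset.Icc (n + 1) N, (1 - lr H i)

lemma lr_pos (H n : ℕ) (hH : 1 ≤ H) : 0 < lr H n := by
  unfold lr
  apply div_pos <;> positivity

lemma lr_le_one (H n : ℕ) (hn : 1 ≤ n) : lr H n ≤ 1 := by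
  unfold lr
  rw [div_le_one (by positivity)]
  have : (1:ℝ) ≤ n := by exact_mod_cast hn
  linarith

lemma Pf_nonneg (H N n : ℕ) : 0 ≤ Pf H N n := by
  apply Finset.prod_nonneg
  intro i hi
  have hi1 : 1 ≤ i := by
    rw [Finset.mem_Icc] at hi; omega
  have := lr_le_one H i hi1
  linarith

lemma Pf_last (H N : ℕ) : Pf H N N = 1 := by
  unfold Pf
  rw [Finset.Icc_eq_empty (by omega), Finset.prod_empty]

lemma Pf_zero (H N : ℕ) (hN : 1 ≤ N) : Pf H N 0 = 0 := by
  unfold Pf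
  apply Finset.prod_eq_zero (i := 1) (by rw [Finset.mem_Icc]; omega)
  unfold lr
  have : ((H:ℝ) + 1) ≠ 0 := by positivity
  field_simp
  simp

lemma Pf_step (H N n : ℕ) (hn : 1 ≤ n) (hnN : n ≤ N) :
    Pf H N (n - 1) = (1 - lr H n) * Pf H N n := by
  unfold Pf
  have h1 : n - 1 + 1 = n := by omega
  rw [h1]
  rw [show Finset.Icc n N = Finset.Ico n (N+1) from rfl,
    Finset.prod_eq_prod_Ico_succ_bot (by omega),
    show Finset.Ico (n+1) (N+1) = Finset.Icc (n+1) N from rfl]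

lemma lrProd_eq (H n N : ℕ) (hn : 1 ≤ n) (hnN : n ≤ N) :
    lrProd H n N = lr H n * Pf H N n := by
  unfold lrProd Pf
  rw [if_neg (by omega), if_neg (by omega)]

lemma lrProd_nonneg (H n N : ℕ) (hH : 1 ≤ H) : 0 ≤ lrProd H n N := by
  unfold lrProd
  split
  · exact le_refl 0
  · apply mul_nonneg
    · split
      · exact zero_le_one
      · exact (lr_pos H _ hH).le
    · exact Pf_nonneg H N n


lemma sum_teles (F : ℕ → ℝ) (N : ℕ) :
    ∑ n ∈ Icc 1 N, (F n - F (n - 1)) = F N - F 0 := by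
  induction N with
  | zero => simp
  | succ N ih =>
      rw [Finset.sum_Icc_succ_top (by omega), ih]
      have : N + 1 - 1 = N := by omega
      rw [this]; ring

lemma sum_lrProd (H N : ℕ) (hH : 1 ≤ H) (hN : 1 ≤ N) :
    ∑ n ∈ Icc 1 N, lrProd H n N = 1 := by
  have hc : ∀ n ∈ Icc 1 N, lrProd H n N = Pf H N n - Pf H N (n - 1) := by
    intro n hn
    rw [Finset.mem_Icc] at hn
    rw [lrProd_eq H n N hn.1 hn.2, Pf_step H N n hn.1 hn.2]; ring
  rw [Finset.sum_congr rfl hc, sum_teles, Pf_last, Pf_zero H N hN]; ring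

lemma weight_lower (H N : ℕ) (hH : 1 ≤ H) (hN : 1 ≤ N) :
    1 / (N : ℝ) ^ ((3:ℝ)/4) ≤ ∑ n ∈ Icc 1 N, lrProd H n N / (n : ℝ) ^ ((3:ℝ)/4) := by
  have h1 : 1 / (N : ℝ) ^ ((3:ℝ)/4) =
      ∑ n ∈ Icc 1 N, lrProd H n N * (1 / (N : ℝ) ^ ((3:ℝ)/4)) := by
    rw [← Finset.sum_mul, sum_lrProd H N hH hN, one_mul]
  rw [h1]
  apply Finset.sum_le_sum
  intro n hn
  rw [Finset.mem_Icc] at hn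
  rw [mul_one_div]
  apply div_le_div_of_nonneg_left ?_ ?_ ?_
  · exact lrProd_nonneg H n N hH
  · exact Real.rpow_pos_of_pos (by exact_mod_cast hn.1) _
  · apply Real.rpow_le_rpow (by positivity) (by exact_mod_cast hn.2) (by norm_num)

lemma weight_upper (H : ℕ) (hH : 1 ≤ H) : ∀ N, 1 ≤ N →
    ∑ n ∈ Icc 1 N, lrProd H n N / (n : ℝ) ^ ((3:ℝ)/4) ≤ 2 / (N : ℝ) ^ ((3:ℝ)/4) := by
  intro N hN
  induction N, hN using Nat.le_induction with
  | base =>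
      rw [show Finset.Icc 1 1 = {1} from rfl, Finset.sum_singleton]
      rw [lrProd_eq H 1 1 le_rfl le_rfl, Pf_last]
      have : lr H 1 ≤ 1 := lr_le_one H 1 le_rfl
      have h2 : ((1:ℕ):ℝ) ^ ((3:ℝ)/4) = 1 := by norm_num
      rw [h2]
      norm_num; linarith
  | succ N hN ih =>
      have hη0 : 0 < lr H (N+1) := lr_pos H (N+1) hH
      have hη1 : lr H (N+1) ≤ 1 := lr_le_one H (N+1) (by omega)
      rw [Finset.sum_Icc_succ_top (by omega)]
      have hsplit : ∀ n ∈ Icc 1 N, lrProd H n (N+1) / (n : ℝ) ^ ((3:ℝ)/4)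
          = (1 - lr H (N+1)) * (lrProd H n N / (n : ℝ) ^ ((3:ℝ)/4)) := by
        intro n hn
        rw [Finset.mem_Icc] at hn
        rw [lrProd_eq H n (N+1) hn.1 (by omega), lrProd_eq H n N hn.1 hn.2]
        unfold Pf
        rw [Finset.prod_Icc_succ_top (by omega)]
        ring
      rw [Finset.sum_congr rfl hsplit, ← Finset.mul_sum]
      rw [lrProd_eq H (N+1) (N+1) (by omega) le_rfl, Pf_last, mul_one]
      -- numeric core
      set η := lr H (N+1) with hηdef
      set x := (N : ℝ) ^ ((3:ℝ)/4) with hxdef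
      set y := ((N+1 : ℕ) : ℝ) ^ ((3:ℝ)/4) with hydef
      have hNpos : (0:ℝ) < N := by exact_mod_cast hN
      have hx : 0 < x := Real.rpow_pos_of_pos hNpos _
      have hy : 0 < y := Real.rpow_pos_of_pos (by exact_mod_cast Nat.succ_pos N) _
      have hstep : (1 - η) * (∑ n ∈ Icc 1 N, lrProd H n N / (n : ℝ) ^ ((3:ℝ)/4))
          ≤ (1 - η) * (2 / x) := by
        apply mul_le_mul_of_nonneg_left ih (by linarith)
      have key : 2 * (N:ℝ) * y ≤ ((H:ℝ) + 2*N + 1) * x := by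
        have e1 : (N:ℝ) = (N:ℝ) ^ ((1:ℝ)/4) * x := by
          rw [hxdef, ← Real.rpow_add hNpos]
          norm_num
        have e2 : ((N:ℝ) + 1) = ((N:ℝ)+1) ^ ((1:ℝ)/4) * y := by
          rw [hydef]
          push_cast
          rw [← Real.rpow_add (by linarith)]
          norm_num
        have e3 : (N:ℝ) ^ ((1:ℝ)/4) ≤ ((N:ℝ)+1) ^ ((1:ℝ)/4) :=
          Real.rpow_le_rpow (by positivity) (by linarith) (by norm_num)
        have e4 : (0:ℝ) ≤ ((N:ℝ)+1) ^ ((1:ℝ)/4) := by positivity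
        have hHr : (1:ℝ) ≤ H := by exact_mod_cast hH
        nlinarith [mul_le_mul_of_nonneg_right e3 (mul_nonneg hx.le hy.le)]
      -- derive η/y + (1-η)*(2/x) ≤ 2/y
      have hD : (0:ℝ) < (H:ℝ) + N + 1 := by positivity
      have h1 : 2 * (1 - η) = 2 * N / ((H:ℝ) + N + 1) := by
        rw [hηdef]; unfold lr; push_cast; field_simp; ring
      have h2 : 2 - η = ((H:ℝ) + 2*N + 1) / ((H:ℝ) + N + 1) := by
        rw [hηdef]; unfold lr; push_cast; field_simp; ring
      have key3 : 2 * (1 - η) * y ≤ (2 - η) * x := by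
        rw [h1, h2, div_mul_eq_mul_div, div_mul_eq_mul_div, div_le_div_iff₀ hD hD]
        nlinarith [key]
      have key4 : 2 * (1 - η) / x ≤ (2 - η) / y := by
        rw [div_le_div_iff₀ hx hy]; linarith
      have final : η / y + (1 - η) * (2 / x) ≤ 2 / y := by
        have e5 : (2 - η) / y = 2 / y - η / y := by rw [sub_div]
        have e6 : (1 - η) * (2 / x) = 2 * (1 - η) / x := by ring
        linarith [key4, e5 ▸ key4]
      have : η / y = lr H (N+1) / ((N+1:ℕ):ℝ) ^ ((3:ℝ)/4) := rfl
      linarith [hstep, final]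
end TelAux

/-- **Telescoping of the reference-advantage bonus** (eq. (32) of the paper).
For any run of the Q-EarlySettled-Advantage algorithm, for every episode `k ∈ [K]` and
step `h ∈ [H]`, writing `N = N_h^k(s_h^k, a_h^k)` and `k^n = k_h^n(s_h^k, a_h^k)`,
`B_h^{R,k^N+1}(s_h^k,a_h^k) + c_b H² log(SAT/δ) / N^{3/4}
  ≤ ∑_{n=1}^N η_n^N b_h^{R,k^n+1}
  ≤ B_h^{R,k^N+1}(s_h^k,a_h^k) + 2 c_b H² log(SAT/δ) / N^{3/4}`. -/
theorem bonus_telescoping_of_QEarlySettledAdvantage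
    (S A : Type) [Fintype S] [Fintype A] [Nonempty S] [Nonempty A]
    [DecidableEq S] [DecidableEq A]
    (M : MDP S A) (K : ℕ) (cb δ : ℝ) (alg : QLAlg M K cb δ)
    (hcb : 0 < cb) (hδ₁ : 0 < δ) (hδ₂ : δ < 1)
    (k : ℕ) (hk : k ∈ Icc 1 K) (h : ℕ) (hh : h ∈ Icc 1 M.H) :
    alg.BR (alg.kvis (alg.N k h (alg.st k h) (alg.ac k h)) h (alg.st k h) (alg.ac k h) + 1)
        h (alg.st k h) (alg.ac k h)
      + cb * (M.H : ℝ) ^ 2 * iota S A K M.H δ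
          / (alg.N k h (alg.st k h) (alg.ac k h) : ℝ) ^ ((3 : ℝ) / 4)
      ≤ (∑ n ∈ Icc 1 (alg.N k h (alg.st k h) (alg.ac k h)),
          lrProd M.H n (alg.N k h (alg.st k h) (alg.ac k h))
            * alg.bR (alg.kvis n h (alg.st k h) (alg.ac k h)) h) ∧
    (∑ n ∈ Icc 1 (alg.N k h (alg.st k h) (alg.ac k h)),
        lrProd M.H n (alg.N k h (alg.st k h) (alg.ac k h))
          * alg.bR (alg.kvis n h (alg.st k h) (alg.ac k h)) h)
      ≤ alg.BR (alg.kvis (alg.N k h (alg.st k h) (alg.ac k h)) h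
            (alg.st k h) (alg.ac k h) + 1) h (alg.st k h) (alg.ac k h)
        + 2 * cb * (M.H : ℝ) ^ 2 * iota S A K M.H δ
            / (alg.N k h (alg.st k h) (alg.ac k h) : ℝ) ^ ((3 : ℝ) / 4) := by
  obtain ⟨hk1, hkK⟩ := Finset.mem_Icc.mp hk
  obtain ⟨hh1, hhH⟩ := Finset.mem_Icc.mp hh
  have hH : 1 ≤ M.H := M.H_pos
  set s := alg.st k h with hs
  set a := alg.ac k h with ha
  -- monotonicity of the counter
  have hstep : ∀ j, 1 ≤ j → j ≤ K → alg.N (j - 1) h s a ≤ alg.N j h s a := by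
    intro j hj1 hjK
    rw [alg.N_upd j (Finset.mem_Icc.mpr ⟨hj1, hjK⟩) h hh s a]
    exact Nat.le_add_right _ _
  have hmono : ∀ i j, i ≤ j → j ≤ K → alg.N i h s a ≤ alg.N j h s a := by
    intro i j hij hjK
    induction j with
    | zero =>
        have hi0 : i = 0 := by omega
        rw [hi0]
    | succ m ih =>
        rcases Nat.lt_or_ge i (m + 1) with hlt | hge
        · refine le_trans (ih (by omega) (by omega)) ?_
          have := hstep (m + 1) (by omega) hjK
          simpa using this
        · have hi : i = m + 1 := by omega
          rw [hi]
  set Nk := alg.N k h s a with hNkdef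
  have hNk1 : 1 ≤ Nk := by
    rw [hNkdef, alg.N_upd k hk h hh s a, if_pos ⟨hs, ha⟩]
    omega
  have hNkK : Nk ≤ alg.N K h s a := hmono k K hkK le_rfl
  have hkv : ∀ n, 1 ≤ n → n ≤ Nk →
      alg.kvis n h s a ∈ Icc 1 K ∧ alg.N (alg.kvis n h s a) h s a = n ∧
        alg.st (alg.kvis n h s a) h = s ∧ alg.ac (alg.kvis n h s a) h = a :=
    fun n h1 h2 => alg.kvis_spec h hh s a n h1 (le_trans h2 hNkK)
  -- if the counter does not move at episode j, then B^R is unchanged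
  have hnovisit : ∀ j, 1 ≤ j → j ≤ K → alg.N j h s a = alg.N (j - 1) h s a →
      alg.BR (j + 1) h s a = alg.BR j h s a := by
    intro j hj1 hjK hNeq
    have hupd := alg.N_upd j (Finset.mem_Icc.mpr ⟨hj1, hjK⟩) h hh s a
    have hcond : ¬(s = alg.st j h ∧ a = alg.ac j h) := by
      intro hc
      rw [if_pos hc] at hupd
      omega
    rw [alg.BR_upd j (Finset.mem_Icc.mpr ⟨hj1, hjK⟩) h hh s a, if_neg hcond]
  have hflat : ∀ c j, c ≤ j → j ≤ K → alg.N c h s a = alg.N j h s a →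
      alg.BR (c + 1) h s a = alg.BR (j + 1) h s a := by
    intro c j hcj
    induction j, hcj using Nat.le_induction with
    | base => intro _ _; rfl
    | succ j hcj ih =>
        intro hjK hN
        have h1 : alg.N c h s a ≤ alg.N j h s a := hmono c j hcj (by omega)
        have h2 : alg.N j h s a ≤ alg.N (j + 1) h s a := by
          have := hstep (j + 1) (by omega) hjK
          simpa using this
        rw [ih (by omega) (by omega)]
        have := hnovisit (j + 1) (by omega) hjK
          (by simp only [Nat.add_sub_cancel]; omega)
        rw [this]
  -- episode of the n-th visit is at least 1, counters before visits
  have hkvpos : ∀ n, 1 ≤ n → n ≤ Nk → 1 ≤ alg.kvis n h s a := by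
    intro n h1 h2
    exact (Finset.mem_Icc.mp (hkv n h1 h2).1).1
  have hNbefore : ∀ n, 1 ≤ n → n ≤ Nk →
      alg.N (alg.kvis n h s a - 1) h s a = n - 1 := by
    intro n h1 h2
    obtain ⟨hmem, hNn, hst, hac⟩ := hkv n h1 h2
    have hupd := alg.N_upd (alg.kvis n h s a) hmem h hh s a
    rw [if_pos ⟨hst.symm, hac.symm⟩, hNn] at hupd
    omega
  set b : ℕ → ℝ := fun n =>
    if n = 0 then (0 : ℝ) else alg.BR (alg.kvis n h s a + 1) h s a with hbdef
  have hbpos : ∀ n, n ≠ 0 → b n = alg.BR (alg.kvis n h s a + 1) h s a := by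
    intro n hn
    rw [hbdef]
    simp [hn]
  have hb0 : b 0 = 0 := by rw [hbdef]; simp
  -- B^R at the beginning of the n-th visit equals its value after the previous one
  have hbprev : ∀ n, 1 ≤ n → n ≤ Nk → alg.BR (alg.kvis n h s a) h s a = b (n - 1) := by
    intro n h1 h2
    obtain ⟨hmem, hNn, hst, hac⟩ := hkv n h1 h2
    obtain ⟨hkv1, hkvK⟩ := Finset.mem_Icc.mp hmem
    rcases Nat.lt_or_ge n 2 with hn2 | hn2
    · have hn1 : n = 1 := by omega
      subst hn1
      have hfl := hflat 0 (alg.kvis 1 h s a - 1) (by omega) (by omega)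
        (by rw [alg.N_init, hNbefore 1 le_rfl h2])
      rw [show alg.kvis 1 h s a - 1 + 1 = alg.kvis 1 h s a by omega] at hfl
      rw [show (1:ℕ) - 1 = 0 from rfl, hb0, ← hfl]
      exact (alg.mom_init h s a).2.2.2.2.1
    · have h1' : 1 ≤ n - 1 := by omega
      have h2' : n - 1 ≤ Nk := by omega
      obtain ⟨hmem', hNn', hst', hac'⟩ := hkv (n - 1) h1' h2'
      have hlt : alg.kvis (n - 1) h s a < alg.kvis n h s a := by
        by_contra hle
        push_neg at hle
        have := hmono _ _ hle (Finset.mem_Icc.mp hmem').2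
        omega
      have hfl := hflat (alg.kvis (n - 1) h s a) (alg.kvis n h s a - 1)
        (by omega) (by omega) (by rw [hNn', hNbefore n h1 h2])
      rw [show alg.kvis n h s a - 1 + 1 = alg.kvis n h s a by omega] at hfl
      rw [← hfl, hbpos (n - 1) (by omega)]
  -- formula for the bonus used at the n-th visit
  have hbr : ∀ n, 1 ≤ n → n ≤ Nk → alg.bR (alg.kvis n h s a) h
      = b n + (1 - lr M.H n) * (b n - b (n - 1)) / lr M.H n
        + cb * (M.H : ℝ) ^ 2 * iota S A K M.H δ / (n : ℝ) ^ ((3 : ℝ) / 4) := by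
    intro n h1 h2
    obtain ⟨hmem, hNn, hst, hac⟩ := hkv n h1 h2
    have hdR := alg.dR_upd (alg.kvis n h s a) hmem h hh s a
    rw [if_pos ⟨hst.symm, hac.symm⟩] at hdR
    have hbRd := alg.bR_def (alg.kvis n h s a) hmem h hh
    rw [hst, hac, hNn] at hbRd
    rw [hbRd, hdR, hbprev n h1 h2, hbpos n (by omega)]
  -- sum decomposition
  have hsum : ∑ n ∈ Icc 1 Nk, lrProd M.H n Nk * alg.bR (alg.kvis n h s a) h
      = b Nk + cb * (M.H : ℝ) ^ 2 * iota S A K M.H δ *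
          ∑ n ∈ Icc 1 Nk, lrProd M.H n Nk / (n : ℝ) ^ ((3 : ℝ) / 4) := by
    have hterm : ∀ n ∈ Icc 1 Nk, lrProd M.H n Nk * alg.bR (alg.kvis n h s a) h
        = ((fun m => TelAux.Pf M.H Nk m * b m) n
            - (fun m => TelAux.Pf M.H Nk m * b m) (n - 1))
          + cb * (M.H : ℝ) ^ 2 * iota S A K M.H δ *
              (lrProd M.H n Nk / (n : ℝ) ^ ((3 : ℝ) / 4)) := by
      intro n hn
      obtain ⟨h1, h2⟩ := Finset.mem_Icc.mp hn
      simp only []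
      rw [hbr n h1 h2, TelAux.lrProd_eq M.H n Nk h1 h2, TelAux.Pf_step M.H Nk n h1 h2]
      have hη : lr M.H n ≠ 0 := (TelAux.lr_pos M.H n hH).ne'
      have hn34 : ((n : ℝ) ^ ((3 : ℝ) / 4)) ≠ 0 :=
        (Real.rpow_pos_of_pos (by exact_mod_cast h1) _).ne'
      field_simp
      ring
    rw [Finset.sum_congr rfl hterm, Finset.sum_add_distrib,
      TelAux.sum_teles (fun m => TelAux.Pf M.H Nk m * b m) Nk, ← Finset.mul_sum]
    simp only [TelAux.Pf_last, hb0, one_mul, mul_zero, sub_zero]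
  -- nonnegativity of the constant
  have hι : 0 ≤ iota S A K M.H δ := by
    unfold iota
    apply Real.log_nonneg
    rw [one_le_div hδ₁]
    have h1 : (1 : ℝ) ≤ (Fintype.card S : ℝ) := by
      exact_mod_cast Nat.one_le_iff_ne_zero.mpr Fintype.card_ne_zero
    have h2 : (1 : ℝ) ≤ (Fintype.card A : ℝ) := by
      exact_mod_cast Nat.one_le_iff_ne_zero.mpr Fintype.card_ne_zero
    have h3 : (1 : ℝ) ≤ (K : ℝ) := by exact_mod_cast hk1.trans hkK
    have h4 : (1 : ℝ) ≤ (M.H : ℝ) := by exact_mod_cast hH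
    have hA : (1:ℝ) ≤ (Fintype.card S : ℝ) * (Fintype.card A : ℝ) := by nlinarith
    have hB : (1:ℝ) ≤ (K:ℝ) * (M.H : ℝ) := by nlinarith
    have hAB : (1:ℝ) ≤ (Fintype.card S : ℝ) * (Fintype.card A : ℝ) * ((K:ℝ) * (M.H : ℝ)) := by
      nlinarith
    linarith
  have hC : 0 ≤ cb * (M.H : ℝ) ^ 2 * iota S A K M.H δ := by
    apply mul_nonneg (by positivity) hι
  have hWl := TelAux.weight_lower M.H Nk hH hNk1
  have hWu := TelAux.weight_upper M.H hH Nk hNk1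
  have hlo := mul_le_mul_of_nonneg_left hWl hC
  have hhi := mul_le_mul_of_nonneg_left hWu hC
  have hbNk : alg.BR (alg.kvis Nk h s a + 1) h s a = b Nk :=
    (hbpos Nk (by omega)).symm
  constructor
  · rw [hsum, hbNk]
    have e1 : cb * (M.H : ℝ) ^ 2 * iota S A K M.H δ * (1 / (Nk : ℝ) ^ ((3 : ℝ) / 4))
        = cb * (M.H : ℝ) ^ 2 * iota S A K M.H δ / (Nk : ℝ) ^ ((3 : ℝ) / 4) := by
      ring
    rw [e1] at hlo
    linarith
  · rw [hsum, hbNk]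
    have e2 : cb * (M.H : ℝ) ^ 2 * iota S A K M.H δ * (2 / (Nk : ℝ) ^ ((3 : ℝ) / 4))
        = 2 * cb * (M.H : ℝ) ^ 2 * iota S A K M.H δ / (Nk : ℝ) ^ ((3 : ℝ) / 4) := by
      ring
    rw [e2] at hhi
    linarith
end
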